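/- arXiv:1405.6923 — 5 statements merged into one kernel-verified Lean document; each statement's English description precedes it below -/
import Mathlib

section
/- There is an absolute constant C such that the following holds. Let f : ℕ → ℂ be a completely multiplicative function with |f(n)| ≤ 1 for all n. Then for all u ≥ 1 and x ≥ 10: | ∏_{p ≤ x} (1 − f(p)/p)^{−1} − Σ_{n : P⁺(n) ≤ x, n ≤ x^u} f(n)/n | ≤ C · (log x)/e^u, where the product is over primes p ≤ x and the sum is over positive integers n all of whose prime factors are at most x and which satisfy n ≤ x^u. -/
/-!
Rankin's trick. The difference is the sum of `f n / n` over the `x`-smooth `n > x ^ u`, and with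
`ε = 1 / log x` each such term has norm at most `1 / n ≤ e^(-u) n^(ε - 1)`; hence the difference is
at most `e^(-u) ∏_{p ≤ x} (1 - p^(ε - 1))⁻¹`. This product is compared factor by factor with
`∏_{p ≤ x} (1 - p^(-1-ε))⁻¹ ≤ ζ(1 + ε) ≤ 1 + log x`: the `p`-th factors differ by a factor
`exp (O(ε log p / p))`, and Chebyshev's bound gives `∑_{p ≤ x} log p / p ≤ log x + log 4`,
so the two products differ by a bounded factor.
-/

open Finset Real

noncomputable def natRpowHom (r : ℝ) : ℕ →* ℝ where
  toFun n := (n : ℝ) ^ r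
  map_one' := by simp
  map_mul' a b := by
    push_cast
    exact mul_rpow (Nat.cast_nonneg a) (Nat.cast_nonneg b)

@[simp]
lemma natRpowHom_apply (r : ℝ) (n : ℕ) : natRpowHom r n = (n : ℝ) ^ r := rfl

lemma norm_natRpowHom_prime_lt_one {r : ℝ} (hr : r < 0) {p : ℕ} (hp : p.Prime) :
    ‖natRpowHom r p‖ < 1 := by
  rw [natRpowHom_apply, norm_of_nonneg (by positivity)]
  exact rpow_lt_one_of_one_lt_of_neg (by exact_mod_cast hp.one_lt) hr

theorem norm_prod_primesBelow_sub_sum_smoothNumbersUpTo_le {F : Type*} [NormedField F]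
    [CompleteSpace F] {f : ℕ →* F} (hf : ∀ {p : ℕ}, p.Prime → ‖f p‖ < 1) {w : ℕ →* ℝ}
    (hw : ∀ {p : ℕ}, p.Prime → ‖w p‖ < 1) (hw₀ : ∀ n, 0 ≤ w n) {N Y : ℕ} {c : ℝ} (hc : 0 ≤ c)
    (hfw : ∀ n, Y < n → ‖f n‖ ≤ c * w n) :
    ‖∏ p ∈ N.primesBelow, (1 - f p)⁻¹ - ∑ n ∈ Nat.smoothNumbersUpTo Y N, f n‖ ≤
      c * ∏ p ∈ N.primesBelow, (1 - w p)⁻¹ := by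
  set S := N.smoothNumbers
  set T : Set ℕ := ↑(Nat.smoothNumbersUpTo Y N)
  have hTS : T ⊆ S := fun n hn => (Nat.mem_smoothNumbersUpTo.mp hn).2
  have hfS := hasSum_subtype_iff_indicator.mp
    (EulerProduct.summable_and_hasSum_smoothNumbers_prod_primesBelow_geometric hf N).2
  have hwS := hasSum_subtype_iff_indicator.mp
    (EulerProduct.summable_and_hasSum_smoothNumbers_prod_primesBelow_geometric hw N).2
  have hfT : HasSum (T.indicator f) (∑ n ∈ Nat.smoothNumbersUpTo Y N, f n) := by
    have : HasSum (T.indicator f) (∑ n ∈ Nat.smoothNumbersUpTo Y N, T.indicator f n) :=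
      hasSum_sum_of_ne_finset_zero fun n hn => Set.indicator_of_notMem hn f
    rwa [Finset.sum_congr rfl fun n hn => Set.indicator_of_mem hn f] at this
  have htail : HasSum ((S \ T).indicator f)
      (∏ p ∈ N.primesBelow, (1 - f p)⁻¹ - ∑ n ∈ Nat.smoothNumbersUpTo Y N, f n) := by
    rw [Set.indicator_sdiff hTS]
    exact hfS.sub hfT
  refine htail.norm_le_of_bounded (hwS.mul_left c) fun n => ?_
  by_cases hn : n ∈ S \ T
  · have hYn : Y < n := by
      by_contra h
      exact hn.2 (Nat.mem_smoothNumbersUpTo.mpr ⟨not_lt.mp h, hn.1⟩)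
    rw [Set.indicator_of_mem hn, Set.indicator_of_mem hn.1]
    exact hfw n hYn
  · rw [Set.indicator_of_notMem hn, norm_zero]
    exact mul_nonneg hc (Set.indicator_nonneg (fun n _ => hw₀ n) n)

lemma inv_le_exp_neg_mul_rpow {x u y : ℝ} (hx : 1 < x) (hy : x ^ u ≤ y) :
    y⁻¹ ≤ exp (-u) * y ^ (1 / log x - 1) := by
  have hlogx : 0 < log x := log_pos hx
  have hy₀ : 0 < y := (rpow_pos_of_pos (by linarith) u).trans_le hy
  have hu : u ≤ log y / log x := by
    rw [le_div_iff₀ hlogx, ← log_rpow (by linarith)]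
    exact log_le_log (rpow_pos_of_pos (by linarith) u) hy
  have hrankin : exp u ≤ y ^ (1 / log x) := by
    rw [rpow_def_of_pos hy₀, mul_one_div]
    exact exp_le_exp.mpr hu
  calc y⁻¹ = exp (-u) * (exp u * y⁻¹) := by rw [← mul_assoc, ← exp_add]; simp
    _ ≤ exp (-u) * (y ^ (1 / log x) * y⁻¹) := by gcongr
    _ = exp (-u) * y ^ (1 / log x - 1) := by rw [rpow_sub_one hy₀.ne', ← div_eq_mul_inv]

lemma filter_primeFactors_le_eq_smoothNumbersUpTo {x : ℝ} (hx : 0 ≤ x) (Y : ℕ) :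
    filter (fun n : ℕ => ∀ ℓ ∈ n.primeFactors, (ℓ : ℝ) ≤ x) (Icc 1 Y) =
      Y.smoothNumbersUpTo (⌊x⌋₊ + 1) := by
  ext n
  simp only [mem_filter, mem_Icc, Nat.mem_smoothNumbersUpTo,
    Nat.mem_smoothNumbers_iff_primeFactors_subset, subset_iff, Nat.mem_primesBelow,
    Nat.lt_succ_iff, Nat.le_floor_iff hx]
  constructor
  · rintro ⟨⟨hn, hnY⟩, hsmooth⟩
    exact ⟨hnY, by omega, fun ℓ hℓ => ⟨hsmooth ℓ hℓ, Nat.prime_of_mem_primeFactors hℓ⟩⟩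
  · rintro ⟨hnY, hn, hsmooth⟩
    exact ⟨⟨by omega, hnY⟩, fun ℓ hℓ => (hsmooth hℓ).1⟩

lemma norm_prod_primesBelow_sub_sum_smoothNumbersUpTo_le_rankin (f : ℕ →* ℂ)
    (hf : ∀ n, ‖f n‖ ≤ 1) {x : ℝ} (hx : exp 1 < x) (u : ℝ) (N : ℕ) :
    ‖∏ p ∈ N.primesBelow, (1 - f p / p)⁻¹ - ∑ n ∈ ⌊x ^ u⌋₊.smoothNumbersUpTo N, f n / n‖ ≤
      exp (-u) * ∏ p ∈ N.primesBelow, (1 - (p : ℝ) ^ (1 / log x - 1))⁻¹ := by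
  let g : ℕ →* ℂ :=
    { toFun n := f n / n
      map_one' := by simp
      map_mul' a b := by simp only [map_mul, Nat.cast_mul]; ring }
  have hg : ∀ n, ‖g n‖ ≤ (n : ℝ)⁻¹ := fun n => by
    simpa [g, norm_div, div_eq_mul_inv] using mul_le_mul_of_nonneg_right (hf n) (by positivity)
  have hx₁ : 1 < x := (one_lt_exp_iff.mpr one_pos).trans hx
  have hε : 1 / log x - 1 < 0 := by
    rw [sub_neg, div_lt_one (log_pos hx₁)]
    exact (lt_log_iff_exp_lt (by linarith)).mpr hx
  refine norm_prod_primesBelow_sub_sum_smoothNumbersUpTo_le (f := g) (fun hp => ?_)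
    (norm_natRpowHom_prime_lt_one hε) (fun n => rpow_nonneg n.cast_nonneg _) (exp_pos _).le
    fun n hn => (hg n).trans (inv_le_exp_neg_mul_rpow hx₁ ?_)
  · exact (hg _).trans_lt (inv_lt_one_of_one_lt₀ (by exact_mod_cast hp.one_lt))
  · exact ((Nat.floor_lt (by positivity)).mp hn).le

lemma tsum_nat_rpow_neg_le {s : ℝ} (hs : 1 < s) :
    ∑' n : ℕ, (n : ℝ) ^ (-s) ≤ 1 + 1 / (s - 1) := by
  have hterm : 0 ≤ ZetaAsymptotics.termTSum s :=
    tsum_nonneg fun n => ZetaAsymptotics.term_nonneg (n + 1) s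
  have hshift : ∑' n : ℕ, (n : ℝ) ^ (-s) = ∑' n : ℕ, 1 / ((n : ℝ) + 1) ^ s := by
    rw [(Real.summable_nat_rpow.mpr (by linarith)).tsum_eq_zero_add]
    simp only [Nat.cast_zero, zero_rpow (by linarith : -s ≠ 0), zero_add, Nat.cast_add_one]
    exact tsum_congr fun n => by rw [rpow_neg (by positivity), one_div]
  nlinarith [ZetaAsymptotics.zeta_limit_aux1 hs]

lemma prod_primesBelow_inv_one_sub_rpow_neg_le {s : ℝ} (hs : 1 < s) (N : ℕ) :
    ∏ p ∈ N.primesBelow, (1 - (p : ℝ) ^ (-s))⁻¹ ≤ 1 + 1 / (s - 1) :=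
  have hsum : Summable (natRpowHom (-s)) := Real.summable_nat_rpow.mpr (by linarith)
  calc ∏ p ∈ N.primesBelow, (1 - (p : ℝ) ^ (-s))⁻¹
      = ∑' m : N.smoothNumbers, (m : ℝ) ^ (-s) :=
        EulerProduct.prod_primesBelow_geometric_eq_tsum_smoothNumbers hsum N
    _ ≤ ∑' n : ℕ, (n : ℝ) ^ (-s) :=
        hsum.tsum_subtype_le _ _ fun n => rpow_nonneg n.cast_nonneg _
    _ ≤ 1 + 1 / (s - 1) := tsum_nat_rpow_neg_le hs

lemma sum_primeFactors_log_le (m : ℕ) : ∑ p ∈ m.primeFactors, log p ≤ log m := by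
  rw [← ArithmeticFunction.vonMangoldt_sum]
  calc ∑ p ∈ m.primeFactors, log p
      = ∑ p ∈ m.primeFactors, ArithmeticFunction.vonMangoldt p :=
        sum_congr rfl fun p hp =>
          (ArithmeticFunction.vonMangoldt_apply_prime (Nat.prime_of_mem_primeFactors hp)).symm
    _ ≤ ∑ d ∈ m.divisors, ArithmeticFunction.vonMangoldt d :=
        sum_le_sum_of_subset_of_nonneg
          (by rw [Nat.primeFactors_eq_to_filter_divisors_prime]; exact filter_subset _ _)
          fun _ _ _ => ArithmeticFunction.vonMangoldt_nonneg

lemma sum_primesLE_div_mul_log_le (n : ℕ) :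
    ∑ p ∈ n.primesLE, ((n / p : ℕ) : ℝ) * log p ≤ n * log n := by
  have hcount : ∀ p, ((n / p : ℕ) : ℝ) * log p = ∑ _m ∈ (Ioc 0 n).filter (p ∣ ·), log p := by
    intro p
    rw [sum_const, Nat.Ioc_filter_dvd_card_eq_div, nsmul_eq_mul]
  calc ∑ p ∈ n.primesLE, ((n / p : ℕ) : ℝ) * log p
      = ∑ m ∈ Ioc 0 n, ∑ p ∈ m.primeFactors, log p := by
        simp_rw [hcount]
        refine sum_comm' fun p m => ?_
        simp only [mem_filter, mem_Ioc, Nat.mem_primesLE, Nat.mem_primeFactors]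
        constructor
        · rintro ⟨⟨hpn, hp⟩, ⟨hm, hmn⟩, hpm⟩
          exact ⟨⟨hp, hpm, hm.ne'⟩, hm, hmn⟩
        · rintro ⟨⟨hp, hpm, hm⟩, hm0, hmn⟩
          exact ⟨⟨(Nat.le_of_dvd hm0 hpm).trans hmn, hp⟩, ⟨hm0, hmn⟩, hpm⟩
    _ ≤ ∑ m ∈ Ioc 0 n, log n := by
        refine sum_le_sum fun m hm => (sum_primeFactors_log_le m).trans ?_
        obtain ⟨hm0, hmn⟩ := mem_Ioc.mp hm
        exact log_le_log (by exact_mod_cast hm0) (by exact_mod_cast hmn)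
    _ = n * log n := by simp

lemma sum_primesLE_log_div_le {n : ℕ} (hn : 0 < n) :
    ∑ p ∈ n.primesLE, log p / p ≤ log n + log 4 := by
  have hn' : (0 : ℝ) < n := by exact_mod_cast hn
  have hfloor : ∀ p ∈ n.primesLE, (n : ℝ) * (log p / p) ≤ ((n / p : ℕ) + 1 : ℝ) * log p := by
    intro p hp
    have hp₀ : 0 < p := (Nat.prime_of_mem_primesLE hp).pos
    have hlt : (n : ℝ) < ((n / p : ℕ) + 1 : ℝ) * p := by
      exact_mod_cast (Nat.lt_div_mul_add hp₀).trans_eq (by ring)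
    calc (n : ℝ) * (log p / p) = n / p * log p := by ring
      _ ≤ ((n / p : ℕ) + 1 : ℝ) * log p :=
        mul_le_mul_of_nonneg_right ((div_le_iff₀ (by exact_mod_cast hp₀)).mpr hlt.le)
          (log_natCast_nonneg p)
  have htheta := Chebyshev.theta_le_log4_mul_x (Nat.cast_nonneg n)
  rw [Chebyshev.theta_eq_sum_primesLE_log] at htheta
  refine le_of_mul_le_mul_left ?_ hn'
  calc (n : ℝ) * ∑ p ∈ n.primesLE, log p / p
      ≤ ∑ p ∈ n.primesLE, ((n / p : ℕ) + 1 : ℝ) * log p := by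
        rw [mul_sum]; exact sum_le_sum hfloor
    _ = ∑ p ∈ n.primesLE, ((n / p : ℕ) : ℝ) * log p + ∑ p ∈ n.primesLE, log p := by
        simp only [add_mul, one_mul, sum_add_distrib]
    _ ≤ n * log n + log 4 * n := add_le_add (sum_primesLE_div_mul_log_le n) htheta
    _ = n * (log n + log 4) := by ring

lemma exp_sub_exp_neg_le {t : ℝ} (ht₀ : 0 ≤ t) (ht₁ : t ≤ 1) : exp t - exp (-t) ≤ 6 * t := by
  have hsplit : exp (-t) = exp t * exp (-(2 * t)) := by rw [← exp_add]; ring_nf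
  have h₁ := add_one_le_exp (-(2 * t))
  have h₂ : exp t ≤ 3 := (exp_le_exp.mpr ht₁).trans exp_one_lt_d9.le |>.trans (by norm_num)
  nlinarith [exp_pos t]

lemma inv_one_sub_le_inv_one_sub_mul_exp {a b : ℝ} (hba : b ≤ a) (ha : a ≤ 3 / 4) :
    (1 - a)⁻¹ ≤ (1 - b)⁻¹ * exp (4 * (a - b)) := by
  have hlin : (1 - a)⁻¹ ≤ (1 - b)⁻¹ * (1 + 4 * (a - b)) := by
    rw [inv_mul_eq_div, inv_eq_one_div, div_le_div_iff₀ (by linarith) (by linarith)]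
    nlinarith
  calc (1 - a)⁻¹ ≤ (1 - b)⁻¹ * (1 + 4 * (a - b)) := hlin
    _ ≤ (1 - b)⁻¹ * exp (4 * (a - b)) := by
      have : 0 ≤ (1 - b)⁻¹ := inv_nonneg.mpr (by linarith)
      gcongr
      linarith [add_one_le_exp (4 * (a - b))]

lemma rpow_sub_one_le_three_quarters {p ε : ℝ} (hp : 2 ≤ p) (hε : ε ≤ 1 / 2) :
    p ^ (ε - 1) ≤ 3 / 4 := by
  have hsqrt : (4 / 3 : ℝ) < √2 := by
    rw [lt_sqrt (by norm_num)]; norm_num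
  calc p ^ (ε - 1) ≤ p ^ (-(1 / 2) : ℝ) := rpow_le_rpow_of_exponent_le (by linarith) (by linarith)
    _ ≤ 2 ^ (-(1 / 2) : ℝ) := rpow_le_rpow_of_nonpos (by norm_num) hp (by norm_num)
    _ = (√2)⁻¹ := by rw [rpow_neg (by norm_num), sqrt_eq_rpow]
    _ ≤ 3 / 4 := by
      rw [inv_le_comm₀ (by positivity) (by norm_num)]
      linarith

lemma inv_one_sub_rpow_sub_one_le {p ε : ℝ} (hp : 2 ≤ p) (hε₀ : 0 ≤ ε) (hε : ε ≤ 1 / 2)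
    (hεp : ε * log p ≤ 1) :
    (1 - p ^ (ε - 1))⁻¹ ≤ (1 - p ^ (-(1 + ε)))⁻¹ * exp (24 * ε * (log p / p)) := by
  have hp₀ : 0 < p := by linarith
  have hle : p ^ (-(1 + ε)) ≤ p ^ (ε - 1) :=
    rpow_le_rpow_of_exponent_le (by linarith) (by linarith)
  have hdiff : p ^ (ε - 1) - p ^ (-(1 + ε)) ≤ 6 * ε * (log p / p) := by
    have ht : 0 ≤ ε * log p := mul_nonneg hε₀ (log_nonneg (by linarith))
    have hexp := exp_sub_exp_neg_le ht hεp
    have h₁ : p ^ (ε - 1) = exp (ε * log p) / p := by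
      rw [rpow_sub_one hp₀.ne', rpow_def_of_pos hp₀, mul_comm]
    have h₂ : p ^ (-(1 + ε)) = exp (-(ε * log p)) / p := by
      rw [show -(1 + ε) = -ε - 1 by ring, rpow_sub_one hp₀.ne', rpow_def_of_pos hp₀]
      ring_nf
    rw [h₁, h₂, ← sub_div, mul_div_assoc']
    exact div_le_div_of_nonneg_right (hexp.trans_eq (by ring)) hp₀.le
  calc (1 - p ^ (ε - 1))⁻¹
      ≤ (1 - p ^ (-(1 + ε)))⁻¹ * exp (4 * (p ^ (ε - 1) - p ^ (-(1 + ε)))) :=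
        inv_one_sub_le_inv_one_sub_mul_exp hle (rpow_sub_one_le_three_quarters hp hε)
    _ ≤ (1 - p ^ (-(1 + ε)))⁻¹ * exp (24 * ε * (log p / p)) := by
        have : 0 ≤ (1 - p ^ (-(1 + ε)))⁻¹ :=
          inv_nonneg.mpr (by linarith [rpow_sub_one_le_three_quarters hp hε])
        gcongr _ * exp ?_
        linarith

lemma prod_primesLE_inv_one_sub_rpow_sub_one_le {x : ℝ} (hx : exp 2 ≤ x) :
    ∏ p ∈ ⌊x⌋₊.primesLE, (1 - (p : ℝ) ^ (1 / log x - 1))⁻¹ ≤ 2 * exp 48 * log x := by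
  have hx₀ : 0 < x := (exp_pos 2).trans_le hx
  have hlogx : 2 ≤ log x := (le_log_iff_exp_le hx₀).mpr hx
  set ε := 1 / log x with hε_def
  have hε₀ : 0 < ε := by positivity
  have hε : ε ≤ 1 / 2 := by rw [hε_def, div_le_div_iff₀ (by linarith) two_pos]; linarith
  have hεx : ε * log x = 1 := by rw [hε_def]; field_simp
  have hfloor : 0 < ⌊x⌋₊ := Nat.floor_pos.mpr (by linarith [add_one_le_exp 2])
  have hprime : ∀ p ∈ ⌊x⌋₊.primesLE, 2 ≤ (p : ℝ) ∧ ε * log p ≤ 1 := by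
    intro p hp
    have hpx : (p : ℝ) ≤ x :=
      (Nat.cast_le.mpr (Nat.le_of_mem_primesLE hp)).trans (Nat.floor_le hx₀.le)
    have hp : (2 : ℝ) ≤ p := by exact_mod_cast Nat.two_le_of_mem_primesLE hp
    exact ⟨hp, hεx ▸ mul_le_mul_of_nonneg_left (log_le_log (by linarith) hpx) hε₀.le⟩
  have hmertens : 24 * ε * ∑ p ∈ ⌊x⌋₊.primesLE, log p / p ≤ 48 := by
    have hlog4 : log 4 ≤ 2 := by
      rw [show (4 : ℝ) = 2 ^ 2 by norm_num, log_pow]; push_cast; linarith [log_two_lt_d9]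
    have hlogfloor : log ⌊x⌋₊ ≤ log x :=
      log_le_log (by exact_mod_cast hfloor) (Nat.floor_le hx₀.le)
    calc 24 * ε * ∑ p ∈ ⌊x⌋₊.primesLE, log p / p ≤ 24 * ε * (log x + 2) :=
          mul_le_mul_of_nonneg_left (by linarith [sum_primesLE_log_div_le hfloor]) (by positivity)
      _ = 24 * (ε * log x) + 48 * ε := by ring
      _ ≤ 48 := by rw [hεx]; linarith
  calc ∏ p ∈ ⌊x⌋₊.primesLE, (1 - (p : ℝ) ^ (ε - 1))⁻¹
      ≤ ∏ p ∈ ⌊x⌋₊.primesLE, ((1 - (p : ℝ) ^ (-(1 + ε)))⁻¹ * exp (24 * ε * (log p / p))) :=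
        prod_le_prod (fun p hp => inv_nonneg.mpr (by
          linarith [rpow_sub_one_le_three_quarters (hprime p hp).1 hε]))
          fun p hp => inv_one_sub_rpow_sub_one_le (hprime p hp).1 hε₀.le hε (hprime p hp).2
    _ = (∏ p ∈ ⌊x⌋₊.primesLE, (1 - (p : ℝ) ^ (-(1 + ε)))⁻¹) *
          exp (24 * ε * ∑ p ∈ ⌊x⌋₊.primesLE, log p / p) := by
        rw [prod_mul_distrib, mul_sum, exp_sum]
    _ ≤ (1 + log x) * exp 48 := by
        gcongr
        · have := prod_primesBelow_inv_one_sub_rpow_neg_le (s := 1 + ε) (by linarith) (⌊x⌋₊ + 1)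
          rwa [add_sub_cancel_left, hε_def, one_div_one_div] at this
    _ ≤ 2 * exp 48 * log x := by nlinarith [exp_pos 48]

theorem euler_product_truncation :
    ∃ C : ℝ, ∀ f : ℕ → ℂ,
      f 1 = 1 → (∀ a b : ℕ, f (a * b) = f a * f b) → (∀ n : ℕ, ‖f n‖ ≤ 1) →
      ∀ u x : ℝ, 1 ≤ u → 10 ≤ x →
        ‖(∏ p ∈ Finset.filter Nat.Prime (Finset.range (⌊x⌋₊ + 1)),
              (1 - f p / p)⁻¹) -
          ∑ n ∈ Finset.filter (fun n : ℕ => ∀ ℓ ∈ n.primeFactors, (ℓ : ℝ) ≤ x)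
              (Finset.Icc 1 ⌊x ^ u⌋₊), f n / n‖ ≤
        C * Real.log x / Real.exp u := by
  refine ⟨2 * exp 48, fun f hf₁ hf_mul hf u x _ hx => ?_⟩
  have hx₂ : exp 2 ≤ x :=
    calc exp 2 = exp 1 ^ 2 := by rw [← exp_nat_mul]; norm_num
      _ ≤ x := by nlinarith [exp_pos 1, exp_one_lt_d9]
  have hx₁ : exp 1 < x := (exp_lt_exp.mpr one_lt_two).trans_le hx₂
  let F : ℕ →* ℂ := { toFun := f, map_one' := hf₁, map_mul' := hf_mul }
  rw [filter_primeFactors_le_eq_smoothNumbersUpTo (by linarith)]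
  calc _ ≤ exp (-u) * ∏ p ∈ (⌊x⌋₊ + 1).primesBelow, (1 - (p : ℝ) ^ (1 / log x - 1))⁻¹ :=
        norm_prod_primesBelow_sub_sum_smoothNumbersUpTo_le_rankin F hf hx₁ u _
    _ ≤ exp (-u) * (2 * exp 48 * log x) :=
        mul_le_mul_of_nonneg_left (prod_primesLE_inv_one_sub_rpow_sub_one_le hx₂) (exp_pos _).le
    _ = 2 * exp 48 * log x / exp u := by rw [exp_neg]; ring
end

section
/- Let m, k be positive integers, N = m²k, and for a positive integer n define T(n) = Σ_{d ∈ ℤ/nℤ} ((d − 4k)/n) · #{ j ∈ ℤ/nℤ : j² ≡ d (mod n) and gcd(N + 1 + j·m, n) = 1 }, where ((d−4k)/n) is the Jacobi symbol; in particular for n = ℓ^w with ℓ an odd prime, ((d−4k)/ℓ^w) = ((d−4k)/ℓ)^w with (·/ℓ) the Legendre symbol. Then for every prime ℓ not dividing 2k and every integer w ≥ 1: T(ℓ^w)/ℓ^{w−1} = −ε_ℓ(m(N−1)) + (ℓ − 1 − (k/ℓ)) if w is even, and T(ℓ^w)/ℓ^{w−1} = −ε_ℓ(m(N−1)) − 1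 if w is odd, where ε_ℓ(a) = 1 if ℓ ∤ a and ε_ℓ(a) = 0 if ℓ | a. -/
open Finset

variable {p : ℕ} [Fact p.Prime]

lemma aux_char (hp : p ≠ 2) : ringChar (ZMod p) ≠ 2 := by
  rw [ZMod.ringChar_zmod_n]; exact hp

lemma aux_sqrts (hp : p ≠ 2) (d : ZMod p) :
    ((univ.filter fun u : ZMod p => u ^ 2 = d).card : ℤ) =
      quadraticChar (ZMod p) d + 1 := by
  have := quadraticChar_card_sqrts (aux_char hp) d
  rw [← this]
  congr 1
  rw [Set.toFinset_setOf]

lemma aux_sumA (hp : p ≠ 2) {A : ZMod p} (hA : A ≠ 0) :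
    ∑ u : ZMod p, quadraticChar (ZMod p) (u ^ 2 - A) = -1 := by
  set χ := quadraticChar (ZMod p) with hχdef
  have hchar := aux_char hp
  have h1 : ∑ u : ZMod p, χ (u ^ 2 - A)
      = ∑ d : ZMod p, ∑ u ∈ univ.filter (fun u : ZMod p => u ^ 2 = d), χ (d - A) :=
    (Finset.sum_fiberwise' univ (fun u : ZMod p => u ^ 2) (fun d => χ (d - A))).symm
  have h2 : ∀ d : ZMod p,
      ∑ u ∈ univ.filter (fun u : ZMod p => u ^ 2 = d), χ (d - A)
        = (χ d + 1) * χ (d - A) := by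
    intro d
    rw [Finset.sum_const, nsmul_eq_mul, ← aux_sqrts hp d]
  have h3 : ∑ d : ZMod p, (χ d + 1) * χ (d - A)
      = ∑ d : ZMod p, χ d * χ (d - A) + ∑ d : ZMod p, χ (d - A) := by
    rw [← Finset.sum_add_distrib]
    exact Finset.sum_congr rfl fun d _ => by ring
  have h4 : ∑ d : ZMod p, χ (d - A) = 0 := by
    rw [Fintype.sum_equiv (Equiv.subRight A) (fun d => χ (d - A)) (fun x => χ x)
      (fun d => rfl)]
    exact quadraticChar_sum_zero hchar
  have hA2 : χ A ^ 2 = 1 := quadraticChar_sq_one hA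
  have h5 : ∑ d : ZMod p, χ d * χ (d - A)
      = ∑ x : ZMod p, χ x * χ (x - 1) := by
    rw [← Fintype.sum_equiv (Equiv.mulLeft₀ A hA) _ (fun d => χ d * χ (d - A))
      (fun x => rfl)]
    refine Finset.sum_congr rfl fun x _ => ?_
    show χ (A * x) * χ (A * x - A) = χ x * χ (x - 1)
    have h : A * x - A = A * (x - 1) := by ring
    rw [h, map_mul, map_mul]
    ring_nf
    rw [hA2, one_mul]
  have h6 : ∑ x : ZMod p, χ x * χ (x - 1) = -1 := by
    have hj : jacobiSum χ χ = -χ (-1) := by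
      have := jacobiSum_nontrivial_inv (quadraticChar_ne_one hchar)
      rwa [(quadraticChar_isQuadratic (ZMod p)).inv] at this
    have : ∑ x : ZMod p, χ x * χ (x - 1) = χ (-1) * jacobiSum χ χ := by
      rw [jacobiSum, Finset.mul_sum]
      refine Finset.sum_congr rfl fun x _ => ?_
      have : x - 1 = -1 * (1 - x) := by ring
      rw [this, map_mul]
      ring
    rw [this, hj]
    have : χ (-1) * -χ (-1) = -(χ (-1) ^ 2) := by ring
    rw [this, quadraticChar_sq_one (by simp : (-1 : ZMod p) ≠ 0)]
  rw [h1, Finset.sum_congr rfl fun d _ => h2 d, h3, h4, h5, h6, add_zero]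

lemma aux_sumB (hp : p ≠ 2) (A : ZMod p) :
    ∑ u : ZMod p, quadraticChar (ZMod p) (u ^ 2 - A) ^ 2
      = (p : ℤ) - 1 - quadraticChar (ZMod p) A := by
  classical
  have h1 : ∀ u : ZMod p, quadraticChar (ZMod p) (u ^ 2 - A) ^ 2
      = 1 - (if u ^ 2 = A then (1 : ℤ) else 0) := by
    intro u
    by_cases h : u ^ 2 = A
    · simp [h]
    · rw [quadraticChar_sq_one (sub_ne_zero.mpr h), if_neg h]; ring
  rw [Finset.sum_congr rfl fun u _ => h1 u, Finset.sum_sub_distrib, Finset.sum_const,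
    Finset.sum_boole, aux_sqrts hp A, Finset.card_univ, ZMod.card, nsmul_eq_mul]
  push_cast
  ring

lemma aux_fiber_card {n m : ℕ} [NeZero n] [NeZero m] (h : m ∣ n) (u : ZMod m) :
    (Finset.univ.filter fun j : ZMod n => ZMod.castHom h (ZMod m) j = u).card = n / m := by
  classical
  have hm : 0 < m := Nat.pos_of_ne_zero (NeZero.ne m)
  have key : ∀ j : ZMod n, ZMod.castHom h (ZMod m) j = u → j.val % m = u.val := by
    intro j hj
    have : ((j.val : ℕ) : ZMod m) = u := by
      rw [ZMod.natCast_val, ← ZMod.castHom_apply (h := h), hj]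
    rw [← this, ZMod.val_natCast]
  rw [show n / m = (Finset.range (n / m)).card from (Finset.card_range _).symm]
  refine Finset.card_bij' (fun j _ => j.val / m) (fun t _ => ((m * t + u.val : ℕ) : ZMod n))
    ?_ ?_ ?_ ?_
  · intro j hj
    rw [Finset.mem_range]
    exact Nat.div_lt_div_of_lt_of_dvd h (ZMod.val_lt j)
  · intro t ht
    simp only [Finset.mem_filter, Finset.mem_univ, true_and]
    rw [map_natCast]
    push_cast
    simp [ZMod.natCast_self, ZMod.natCast_val, ZMod.cast_id]
  · intro j hj
    simp only [Finset.mem_filter, Finset.mem_univ, true_and] at hj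
    have h2 : m * (j.val / m) + u.val = j.val := by
      rw [← key j hj]; exact Nat.div_add_mod j.val m
    show ((m * (j.val / m) + u.val : ℕ) : ZMod n) = j
    rw [h2, ZMod.natCast_val, ZMod.cast_id]
  · intro t ht
    rw [Finset.mem_range] at ht
    have hlt : m * t + u.val < n := by
      have h1 : m * t + m ≤ n := by
        have := Nat.mul_le_mul_left m (Nat.succ_le_of_lt ht)
        rwa [Nat.mul_succ, Nat.mul_div_cancel' h] at this
      exact lt_of_lt_of_le (by have := u.val_lt; omega) h1
    show (((m * t + u.val : ℕ) : ZMod n)).val / m = t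
    rw [ZMod.val_natCast_of_lt hlt, Nat.mul_add_div hm, Nat.div_eq_of_lt u.val_lt, add_zero]

lemma aux_sum_comp {n m : ℕ} [NeZero n] [NeZero m] (h : m ∣ n) (g : ZMod m → ℤ) :
    ∑ j : ZMod n, g (ZMod.castHom h (ZMod m) j) = (n / m : ℕ) * ∑ u : ZMod m, g u := by
  classical
  rw [← Finset.sum_fiberwise' Finset.univ (fun j : ZMod n => ZMod.castHom h (ZMod m) j) g,
    Finset.mul_sum]
  exact Finset.sum_congr rfl fun u _ => by
    rw [Finset.sum_const, aux_fiber_card h u, nsmul_eq_mul]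

lemma aux_pow {b : ℤ} (hb : b = 0 ∨ b = 1 ∨ b = -1) {w : ℕ} (hw : 1 ≤ w) :
    b ^ w = if Even w then b ^ 2 else b := by
  have hw0 : w ≠ 0 := Nat.one_le_iff_ne_zero.mp hw
  rcases hb with h | h | h <;> subst h
  · rw [zero_pow hw0]; split <;> simp
  · simp
  · by_cases h : Even w
    · rw [if_pos h, h.neg_one_pow]; norm_num
    · rw [if_neg h, (Nat.not_even_iff_odd.mp h).neg_one_pow]

lemma aux_tri (x : ZMod p) : quadraticChar (ZMod p) x = 0 ∨
    quadraticChar (ZMod p) x = 1 ∨ quadraticChar (ZMod p) x = -1 := by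
  by_cases h : x = 0
  · left; simp [h]
  · right; exact quadraticChar_dichotomy h

lemma aux_field (hp : p ≠ 2) {w : ℕ} (hw : 1 ≤ w) (m k : ℕ) (hk : ¬ p ∣ k) :
    ∑ u : ZMod p, quadraticChar (ZMod p) (u ^ 2 - ((4 * k : ℕ) : ZMod p)) ^ w *
        (if IsUnit (((m ^ 2 * k : ℕ) : ZMod p) + 1 + u * (m : ℕ)) then (1 : ℤ) else 0)
      = -(if (p : ℤ) ∣ (m : ℤ) * ((m : ℤ) ^ 2 * k - 1) then 0 else 1) +
        (if Even w then (p : ℤ) - 1 - legendreSym p k else -1) := by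
  classical
  set χ := quadraticChar (ZMod p) with hχdef
  have hchar := aux_char hp
  have hp2 : (2 : ZMod p) ≠ 0 := by
    intro h
    have h2 : ((2 : ℕ) : ZMod p) = 0 := by push_cast; exact h
    rw [ZMod.natCast_eq_zero_iff] at h2
    exact hp ((Nat.prime_dvd_prime_iff_eq Fact.out Nat.prime_two).mp h2)
  have hK : ((k : ℕ) : ZMod p) ≠ 0 := by
    rw [Ne, ZMod.natCast_eq_zero_iff]; exact hk
  set μ : ZMod p := (m : ZMod p) with hμdef
  set K : ZMod p := (k : ZMod p) with hKdef
  have hA4 : ((4 * k : ℕ) : ZMod p) = 2 ^ 2 * K := by push_cast; ring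
  have hA : ((4 * k : ℕ) : ZMod p) ≠ 0 := by
    rw [hA4]
    exact mul_ne_zero (pow_ne_zero 2 hp2) hK
  have hN : ((m ^ 2 * k : ℕ) : ZMod p) = μ ^ 2 * K := by push_cast; ring
  have hχA : χ ((4 * k : ℕ) : ZMod p) = legendreSym p k := by
    rw [hA4, map_mul, quadraticChar_sq_one' hp2, one_mul, legendreSym]
    norm_cast
  -- the full sum
  have hfull : ∑ u : ZMod p, χ (u ^ 2 - ((4 * k : ℕ) : ZMod p)) ^ w
      = if Even w then (p : ℤ) - 1 - legendreSym p k else -1 := by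
    have hterm : ∀ u : ZMod p, χ (u ^ 2 - ((4 * k : ℕ) : ZMod p)) ^ w
        = if Even w then χ (u ^ 2 - ((4 * k : ℕ) : ZMod p)) ^ 2
          else χ (u ^ 2 - ((4 * k : ℕ) : ZMod p)) :=
      fun u => aux_pow (aux_tri _) hw
    rw [Finset.sum_congr rfl fun u _ => hterm u]
    by_cases hEw : Even w
    · simp only [if_pos hEw]
      rw [aux_sumB hp, hχA]
    · simp only [if_neg hEw]
      exact aux_sumA hp hA
  -- rewrite indicator
  have hind : ∀ u : ZMod p,
      (if IsUnit (((m ^ 2 * k : ℕ) : ZMod p) + 1 + u * (m : ℕ)) then (1 : ℤ) else 0)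
        = 1 - (if μ ^ 2 * K + 1 + u * μ = 0 then (1 : ℤ) else 0) := by
    intro u
    rw [hN]
    by_cases h : μ ^ 2 * K + 1 + u * μ = 0
    · rw [if_neg, if_pos h]; · ring
      rw [h]; exact not_isUnit_zero
    · rw [if_pos (isUnit_iff_ne_zero.mpr h), if_neg h]; ring
  have hsplit : ∑ u : ZMod p, χ (u ^ 2 - ((4 * k : ℕ) : ZMod p)) ^ w *
        (if IsUnit (((m ^ 2 * k : ℕ) : ZMod p) + 1 + u * (m : ℕ)) then (1 : ℤ) else 0)
      = (∑ u : ZMod p, χ (u ^ 2 - ((4 * k : ℕ) : ZMod p)) ^ w)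
        - ∑ u : ZMod p, χ (u ^ 2 - ((4 * k : ℕ) : ZMod p)) ^ w *
            (if μ ^ 2 * K + 1 + u * μ = 0 then (1 : ℤ) else 0) := by
    rw [← Finset.sum_sub_distrib]
    refine Finset.sum_congr rfl fun u _ => ?_
    rw [hind u]; ring
  -- the correction sum
  have hdvd : ((p : ℤ) ∣ (m : ℤ) * ((m : ℤ) ^ 2 * k - 1)) ↔ μ * (μ ^ 2 * K - 1) = 0 := by
    rw [← ZMod.intCast_zmod_eq_zero_iff_dvd]
    constructor <;> intro h <;> [skip; skip] <;>
      · have := h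
        push_cast at this ⊢
        convert this using 2 <;> push_cast <;> ring_nf <;> try rfl
  have hE : ∑ u : ZMod p, χ (u ^ 2 - ((4 * k : ℕ) : ZMod p)) ^ w *
        (if μ ^ 2 * K + 1 + u * μ = 0 then (1 : ℤ) else 0)
      = (if (p : ℤ) ∣ (m : ℤ) * ((m : ℤ) ^ 2 * k - 1) then 0 else 1) := by
    by_cases hμ : μ = 0
    · have hcond : ∀ u : ZMod p, ¬(μ ^ 2 * K + 1 + u * μ = 0) := by
        intro u
        rw [hμ]
        simp
      rw [if_pos (hdvd.mpr (by rw [hμ, zero_mul]))]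
      rw [Finset.sum_congr rfl fun u _ => by rw [if_neg (hcond u), mul_zero]]
      exact Finset.sum_const_zero
    · set u₀ : ZMod p := -(μ ^ 2 * K + 1) * μ⁻¹ with hu₀
      have hcond : ∀ u : ZMod p, (μ ^ 2 * K + 1 + u * μ = 0) ↔ u = u₀ := by
        intro u
        rw [hu₀]
        constructor
        · intro h
          field_simp
          linear_combination h
        · intro h
          rw [h]
          field_simp
          ring
      have hsum : ∑ u : ZMod p, χ (u ^ 2 - ((4 * k : ℕ) : ZMod p)) ^ w *
            (if μ ^ 2 * K + 1 + u * μ = 0 then (1 : ℤ) else 0)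
          = χ (u₀ ^ 2 - ((4 * k : ℕ) : ZMod p)) ^ w := by
        rw [Finset.sum_congr rfl fun u _ => by
          simp only [hcond u, mul_ite, mul_one, mul_zero]
          rfl,
          Finset.sum_ite_eq' Finset.univ u₀
            (fun u => χ (u ^ 2 - ((4 * k : ℕ) : ZMod p)) ^ w),
          if_pos (Finset.mem_univ u₀)]
      rw [hsum]
      set t : ZMod p := (μ ^ 2 * K - 1) * μ⁻¹ with ht
      have hsq : u₀ ^ 2 - ((4 * k : ℕ) : ZMod p) = t ^ 2 := by
        rw [hA4, hu₀, ht]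
        field_simp
        ring
      rw [hsq]
      by_cases h1 : μ ^ 2 * K - 1 = 0
      · rw [if_pos (hdvd.mpr (by rw [h1, mul_zero]))]
        rw [ht, h1, zero_mul]
        have : χ ((0 : ZMod p) ^ 2) = 0 := by rw [hχdef]; simp
        rw [this, zero_pow (Nat.one_le_iff_ne_zero.mp hw)]
      · have htne : t ≠ 0 := mul_ne_zero h1 (inv_ne_zero hμ)
        rw [if_neg (fun h => (mul_ne_zero hμ h1) (hdvd.mp h))]
        rw [quadraticChar_sq_one' htne, one_pow]
  rw [hsplit, hfull, hE]
  ring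

lemma aux_isUnit {w : ℕ} (hw : w ≠ 0) (x : ZMod (p ^ w)) :
    IsUnit x ↔ IsUnit (ZMod.castHom (dvd_pow_self p hw) (ZMod p) x) := by
  haveI : NeZero (p ^ w) := ⟨pow_ne_zero w (Nat.Prime.ne_zero Fact.out)⟩
  have hx : ((x.val : ℕ) : ZMod (p ^ w)) = x := by rw [ZMod.natCast_val, ZMod.cast_id]
  rw [← hx, map_natCast, ZMod.isUnit_iff_coprime, ZMod.isUnit_iff_coprime]
  exact Nat.coprime_pow_right_iff (Nat.pos_of_ne_zero hw) _ _



/-- For `N = m²k` and `n = ℓ^w` a power of an odd prime, the character sum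
`T(ℓ^w) = Σ_{d mod ℓ^w} ((d-4k)/ℓ)^w · #{j mod ℓ^w : j² ≡ d, gcd(N+1+jm, ℓ^w) = 1}`. -/
noncomputable def Tpp (m k ℓ : ℕ) [Fact ℓ.Prime] (w : ℕ) : ℤ :=
  ∑ d : ZMod (ℓ ^ w),
    legendreSym ℓ ((d.val : ℤ) - 4 * k) ^ w *
      (Nat.card {j : ZMod (ℓ ^ w) //
        j ^ 2 = d ∧ IsUnit (((m ^ 2 * k : ℕ) : ZMod (ℓ ^ w)) + 1 + j * m)} : ℤ)

theorem odd_primes_prop (m k : ℕ) (hm : 1 ≤ m) (hk : 1 ≤ k)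
    (ℓ : ℕ) [Fact ℓ.Prime] (hℓ : ¬ℓ ∣ 2 * k) (w : ℕ) (hw : 1 ≤ w) :
    Tpp m k ℓ w =
      (ℓ : ℤ) ^ (w - 1) *
        (-(if (ℓ : ℤ) ∣ (m : ℤ) * ((m : ℤ) ^ 2 * k - 1) then 0 else 1) +
          if Even w then (ℓ : ℤ) - 1 - legendreSym ℓ k else -1) := by
  classical
  have hw0 : w ≠ 0 := Nat.one_le_iff_ne_zero.mp hw
  have hp2 : ℓ ≠ 2 := fun h => hℓ (by rw [h]; exact dvd_mul_right 2 k)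
  have hpk : ¬ℓ ∣ k := fun h => hℓ (h.mul_left 2)
  haveI : NeZero (ℓ ^ w) := ⟨pow_ne_zero w (Nat.Prime.ne_zero Fact.out)⟩
  have hdvd : ℓ ∣ ℓ ^ w := dvd_pow_self ℓ hw0
  set φ := ZMod.castHom hdvd (ZMod ℓ) with hφ
  set g : ZMod ℓ → ℤ := fun u =>
    quadraticChar (ZMod ℓ) (u ^ 2 - ((4 * k : ℕ) : ZMod ℓ)) ^ w *
      (if IsUnit (((m ^ 2 * k : ℕ) : ZMod ℓ) + 1 + u * (m : ℕ)) then (1 : ℤ) else 0) with hg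
  set P : ZMod (ℓ ^ w) → Prop :=
    fun j => IsUnit (((m ^ 2 * k : ℕ) : ZMod (ℓ ^ w)) + 1 + j * m) with hP
  -- Step 1: reindex the sum over j
  have h1 : Tpp m k ℓ w = ∑ j : ZMod (ℓ ^ w),
      legendreSym ℓ ((((j ^ 2 : ZMod (ℓ ^ w)).val : ℤ)) - 4 * k) ^ w *
        (if P j then (1 : ℤ) else 0) := by
    unfold Tpp
    have hcard : ∀ d : ZMod (ℓ ^ w),
        (Nat.card {j : ZMod (ℓ ^ w) //
          j ^ 2 = d ∧ IsUnit (((m ^ 2 * k : ℕ) : ZMod (ℓ ^ w)) + 1 + j * m)} : ℤ)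
          = ∑ j : ZMod (ℓ ^ w), if j ^ 2 = d ∧ P j then (1 : ℤ) else 0 := by
      intro d
      rw [Nat.card_eq_fintype_card, Fintype.card_subtype, Finset.sum_boole]
    rw [Finset.sum_congr rfl fun d _ => by rw [hcard d]]
    rw [Finset.sum_congr rfl fun d _ => Finset.mul_sum _ _ _]
    rw [Finset.sum_comm]
    refine Finset.sum_congr rfl fun j _ => ?_
    by_cases hPj : P j
    · simp only [hPj, and_true, if_pos, mul_ite, mul_one, mul_zero]
      rw [Finset.sum_ite_eq Finset.univ (j ^ 2)
        (fun d : ZMod (ℓ ^ w) => legendreSym ℓ ((d.val : ℤ) - 4 * k) ^ w),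
        if_pos (Finset.mem_univ _)]
    · simp only [hPj, and_false, if_false, mul_zero, Finset.sum_const_zero]
  -- Step 2: the summand factors through φ
  have h2 : ∀ j : ZMod (ℓ ^ w),
      legendreSym ℓ ((((j ^ 2 : ZMod (ℓ ^ w)).val : ℤ)) - 4 * k) ^ w *
        (if P j then (1 : ℤ) else 0) = g (φ j) := by
    intro j
    have hleg : legendreSym ℓ ((((j ^ 2 : ZMod (ℓ ^ w)).val : ℤ)) - 4 * k)
        = quadraticChar (ZMod ℓ) ((φ j) ^ 2 - ((4 * k : ℕ) : ZMod ℓ)) := by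
      rw [legendreSym]
      congr 1
      push_cast
      rw [ZMod.natCast_val, ← ZMod.castHom_apply (h := hdvd), map_pow]
    have hunit : P j ↔ IsUnit (((m ^ 2 * k : ℕ) : ZMod ℓ) + 1 + (φ j) * (m : ℕ)) := by
      have hmap : φ (((m ^ 2 * k : ℕ) : ZMod (ℓ ^ w)) + 1 + j * (m : ℕ))
          = ((m ^ 2 * k : ℕ) : ZMod ℓ) + 1 + φ j * (m : ℕ) := by
        rw [map_add, map_add, map_mul, map_one, map_natCast, map_natCast]
      show IsUnit (((m ^ 2 * k : ℕ) : ZMod (ℓ ^ w)) + 1 + j * m) ↔ _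
      rw [aux_isUnit hw0, hmap]
    rw [hg]
    simp only
    rw [hleg, if_congr hunit rfl rfl]
  rw [h1, Finset.sum_congr rfl fun j _ => h2 j]
  -- Step 3: sum over fibers
  rw [aux_sum_comp hdvd g]
  have hcardq : (ℓ ^ w / ℓ : ℕ) = ℓ ^ (w - 1) := by
    simpa using Nat.pow_div hw (Nat.Prime.pos Fact.out)
  rw [hcardq]
  -- Step 4: evaluate the field sum
  have := aux_field (p := ℓ) hp2 hw m k hpk
  rw [hg]
  simp only
  rw [this]
  push_cast
  ring
end

section
/- Let m, k be positive integers, N = m²k, and for a positive integer n define T(n) = Σ_{d ∈ ℤ/nℤ} ((d − 4k)/n) · #{ j ∈ ℤ/nℤ : j² ≡ d (mod n) and gcd(N + 1 + j·m, n) = 1 }, where ((d−4k)/ℓ^w) = ((d−4k)/ℓ)^w with (·/ℓ) the Legendre symbol for odd primes ℓ. Then for every prime ℓ not dividing 2k, the series P(ℓ) := 1 + Σ_{w ≥ 1} T(ℓ^w)/(ℓ^{2w−1}·(ℓ − ε_ℓ(m))) converges and P(ℓ) = ( ℓ³ − ε_ℓ(m)·ℓ² − (1 + ε_ℓ(m)·ε_ℓ(N−1))·ℓ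 − 1 − ε_ℓ(N−1)·(k/ℓ) ) / ( (ℓ² − 1)·(ℓ − ε_ℓ(m)) ), where ε_ℓ(a) = 1 if ℓ ∤ a and ε_ℓ(a) = 0 if ℓ | a. -/
open Finset

lemma sum_mul_natCard_fiber {α β R : Type*} [Fintype α] [Fintype β] [DecidableEq β] [Semiring R]
    (g : α → β) (p : α → Prop) [DecidablePred p] (f : β → R) :
    ∑ b, f b * (Nat.card {a // g a = b ∧ p a} : R) = ∑ a with p a, f (g a) := by
  rw [← sum_fiberwise' _ g f]
  refine sum_congr rfl fun b _ => ?_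
  rw [sum_const, nsmul_eq_mul', Nat.card_eq_fintype_card, Fintype.card_subtype, filter_filter]
  simp only [and_comm]

lemma AddMonoidHom.sum_comp_of_surjective {G H F M : Type*} [AddGroup G] [Fintype G] [AddGroup H]
    [Fintype H] [DecidableEq H] [FunLike F G H] [AddMonoidHomClass F G H] [AddCommMonoid M]
    (π : F) (hπ : Function.Surjective π) (g : H → M) :
    ∑ x, g (π x) = #{x | π x = 0} • ∑ y, g y := by
  rw [← sum_fiberwise' _ π g, smul_sum]
  refine sum_congr rfl fun y _ => ?_
  rw [sum_const, AddMonoidHom.card_fiber_eq_of_mem_range π (hπ y) (hπ 0)]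

lemma ZMod.sum_comp_castHom {M : Type*} [AddCommMonoid M] {m n : ℕ} [NeZero m] [NeZero n]
    (h : n ∣ m) (g : ZMod n → M) :
    ∑ x : ZMod m, g (castHom h (ZMod n) x) = (m / n) • ∑ y, g y := by
  have hcard := AddMonoidHom.sum_comp_of_surjective _ (castHom_surjective h) fun _ => 1
  simp only [sum_const, card_univ, ZMod.card, smul_eq_mul, mul_one] at hcard
  rw [AddMonoidHom.sum_comp_of_surjective _ (castHom_surjective h),
    Nat.div_eq_of_eq_mul_left (NeZero.pos n) hcard]

lemma ZMod.isUnit_castHom_iff {p e : ℕ} [Fact p.Prime] (he : e ≠ 0) (x : ZMod (p ^ e)) :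
    IsUnit (castHom (dvd_pow_self p he) (ZMod p) x) ↔ IsUnit x := by
  rw [← natCast_zmod_val x, map_natCast, isUnit_iff_coprime, isUnit_iff_coprime,
    Nat.coprime_pow_right_iff (Nat.pos_of_ne_zero he)]

section QuadraticChar

variable {F : Type*} [Field F] [Fintype F] [DecidableEq F]

local notation "χ" => quadraticChar F

lemma quadraticChar_pow_succ (x : F) (w : ℕ) :
    χ x ^ (w + 1) = if Even w then χ x else χ x ^ 2 := by
  have hχ := quadraticChar_isQuadratic F
  rw [← MulChar.pow_apply' _ (Nat.add_one_ne_zero w), ← MulChar.pow_apply' _ two_ne_zero]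
  split_ifs with hw
  · rw [hχ.pow_odd hw.add_one]
  · rw [hχ.pow_even (Nat.not_even_iff_odd.mp hw).add_one, hχ.pow_even even_two]

lemma quadraticChar_card_sqrts' (hF : ringChar F ≠ 2) (a : F) :
    (#{y | y ^ 2 = a} : ℤ) = χ a + 1 := by
  rw [← quadraticChar_card_sqrts hF a, Set.toFinset_ofPred]

lemma sum_quadraticChar_mul_sub (hF : ringChar F ≠ 2) {a : F} (ha : a ≠ 0) :
    ∑ d : F, χ d * χ (d - a) = -1 := by
  have hχ := quadraticChar_isQuadratic F
  have hJ : jacobiSum χ χ = -χ (-1) := by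
    simpa only [hχ.inv] using jacobiSum_nontrivial_inv (quadraticChar_ne_one hF)
  calc ∑ d : F, χ d * χ (d - a) = ∑ e : F, χ (a * e) * χ (a * e - a) :=
        (Fintype.sum_equiv (Equiv.mulLeft₀ a ha) _ _ fun _ => rfl).symm
    _ = ∑ e : F, χ (-1) * (χ e * χ (1 - e)) := by
        refine sum_congr rfl fun e _ => ?_
        rw [show a * e - a = a * (-1 * (1 - e)) by ring, map_mul, map_mul, map_mul]
        linear_combination (χ e * χ (-1) * χ (1 - e)) * quadraticChar_sq_one ha
    _ = -1 := by
        rw [← mul_sum, ← jacobiSum, hJ, mul_neg, ← map_mul]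
        norm_num

lemma sum_quadraticChar_sq_sub (hF : ringChar F ≠ 2) {a : F} (ha : a ≠ 0) :
    ∑ y : F, χ (y ^ 2 - a) = -1 := by
  calc ∑ y : F, χ (y ^ 2 - a) = ∑ d : F, #{y | y ^ 2 = d} • χ (d - a) := by
        simp only [← sum_const, sum_fiberwise']
    _ = ∑ d : F, χ d * χ (d - a) + ∑ d : F, χ (d - a) := by
        simp only [nsmul_eq_mul, quadraticChar_card_sqrts' hF, add_mul, one_mul, sum_add_distrib]
    _ = -1 := by
        rw [sum_quadraticChar_mul_sub hF ha,
          Fintype.sum_equiv (Equiv.subRight a) (fun d => χ (d - a)) χ fun _ => rfl,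
          quadraticChar_sum_zero hF, add_zero]

lemma sum_quadraticChar_sq_sub_sq (hF : ringChar F ≠ 2) (a : F) :
    ∑ y : F, χ (y ^ 2 - a) ^ 2 = Fintype.card F - 1 - χ a := by
  have hterm (y : F) : χ (y ^ 2 - a) ^ 2 = 1 - if y ^ 2 = a then 1 else 0 := by
    split_ifs with h
    · simp [h]
    · rw [quadraticChar_sq_one (sub_ne_zero.mpr h), sub_zero]
  simp only [hterm, sum_sub_distrib, sum_boole, quadraticChar_card_sqrts' hF, sum_const, card_univ,
    nsmul_one]
  ring

lemma sum_quadraticChar_sq_sub_pow_succ (hF : ringChar F ≠ 2) {a : F} (ha : a ≠ 0) (w : ℕ) :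
    ∑ y : F, χ (y ^ 2 - a) ^ (w + 1) = if Even w then -1 else Fintype.card F - 1 - χ a := by
  rw [sum_congr rfl fun y _ => quadraticChar_pow_succ _ w]
  split_ifs
  exacts [sum_quadraticChar_sq_sub hF ha, sum_quadraticChar_sq_sub_sq hF a]

lemma quadraticChar_eq_one_of_sq_mul_eq_one {μ κ : F} (h : μ ^ 2 * κ = 1) : χ κ = 1 := by
  have hμ : μ ≠ 0 := by rintro rfl; simp at h
  calc χ κ = χ (μ ^ 2) * χ κ := by rw [quadraticChar_sq_one' hμ, one_mul]
    _ = 1 := by rw [← map_mul, h, map_one]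

lemma sum_quadraticChar_pow_filter_ne_zero (μ κ : F) {n : ℕ} (hn : n ≠ 0) :
    ∑ y with μ ^ 2 * κ + 1 + y * μ ≠ 0, χ (y ^ 2 - 4 * κ) ^ n
      = ∑ y, χ (y ^ 2 - 4 * κ) ^ n - χ μ ^ 2 * χ (μ ^ 2 * κ - 1) ^ 2 := by
  rcases eq_or_ne μ 0 with rfl | hμ
  · simp
  set y₀ := -(μ ^ 2 * κ + 1) / μ
  have hline (y : F) : μ ^ 2 * κ + 1 + y * μ = μ * (y - y₀) := by
    simp only [y₀]; field_simp; ring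
  have hfilter : ({y | μ ^ 2 * κ + 1 + y * μ ≠ 0} : Finset F) = univ.erase y₀ := by
    ext y; simp [hline, hμ, sub_eq_zero]
  have hy₀ : y₀ ^ 2 - 4 * κ = ((μ ^ 2 * κ - 1) / μ) ^ 2 := by
    simp only [y₀]; field_simp; ring
  rw [hfilter, sum_erase_eq_sub (mem_univ y₀), hy₀, quadraticChar_sq_one hμ, one_mul]
  rcases eq_or_ne (μ ^ 2 * κ - 1) 0 with h | h
  · simp [h, hn]
  · rw [quadraticChar_sq_one' (div_ne_zero h hμ), quadraticChar_sq_one h, one_pow]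

end QuadraticChar

lemma hasSum_ite_even_div_pow {L : ℝ} (hL : 1 < L) (a b : ℝ) :
    HasSum (fun w : ℕ => (if Even w then a else b) / L ^ (w + 1)) ((a * L + b) / (L ^ 2 - 1)) := by
  have hL0 : L ≠ 0 := by positivity
  have hL2 : L ^ 2 - 1 ≠ 0 := by nlinarith
  have hgeom : HasSum (fun n : ℕ => ((L ^ 2)⁻¹) ^ n) (L ^ 2 / (L ^ 2 - 1)) := by
    convert hasSum_geometric_of_lt_one (r := (L ^ 2)⁻¹) (by positivity)
      (inv_lt_one_of_one_lt₀ (by nlinarith)) using 1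
    field_simp
  have heven : HasSum (fun n : ℕ => (if Even (2 * n) then a else b) / L ^ (2 * n + 1))
      (a / L * (L ^ 2 / (L ^ 2 - 1))) := by
    refine (hgeom.mul_left (a / L)).congr_fun fun n => ?_
    rw [if_pos (even_two_mul n), pow_succ, pow_mul, inv_pow]
    field_simp
  have hodd : HasSum (fun n : ℕ => (if Even (2 * n + 1) then a else b) / L ^ (2 * n + 1 + 1))
      (b / L ^ 2 * (L ^ 2 / (L ^ 2 - 1))) := by
    refine (hgeom.mul_left (b / L ^ 2)).congr_fun fun n => ?_
    rw [if_neg (Nat.not_even_two_mul_add_one n), pow_succ, pow_succ, pow_mul, inv_pow]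
    field_simp
  convert HasSum.even_add_odd (f := fun w : ℕ => (if Even w then a else b) / L ^ (w + 1))
    heven hodd using 1
  field_simp

lemma Tpp_succ_eq_pow_mul_sum (m k ℓ : ℕ) [Fact ℓ.Prime] (w : ℕ) :
    Tpp m k ℓ (w + 1) = ℓ ^ w * ∑ y : ZMod ℓ with (m : ZMod ℓ) ^ 2 * k + 1 + y * m ≠ 0,
      quadraticChar (ZMod ℓ) (y ^ 2 - 4 * k) ^ (w + 1) := by
  classical
  set π := ZMod.castHom (dvd_pow_self ℓ (Nat.add_one_ne_zero w)) (ZMod ℓ)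
  set g : ZMod ℓ → ℤ := fun y => if (m : ZMod ℓ) ^ 2 * k + 1 + y * m ≠ 0 then
    quadraticChar (ZMod ℓ) (y ^ 2 - 4 * k) ^ (w + 1) else 0
  have hterm (j : ZMod (ℓ ^ (w + 1))) :
      (if IsUnit (((m ^ 2 * k : ℕ) : ZMod (ℓ ^ (w + 1))) + 1 + j * m) then
        legendreSym ℓ (((j ^ 2).val : ℤ) - 4 * k) ^ (w + 1) else 0) = g (π j) := by
    have hunit : IsUnit (((m ^ 2 * k : ℕ) : ZMod (ℓ ^ (w + 1))) + 1 + j * m) ↔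
        (m : ZMod ℓ) ^ 2 * k + 1 + π j * m ≠ 0 := by
      rw [← ZMod.isUnit_castHom_iff (Nat.add_one_ne_zero w), isUnit_iff_ne_zero]
      simp [π]
    have hleg : legendreSym ℓ (((j ^ 2).val : ℤ) - 4 * k) =
        quadraticChar (ZMod ℓ) (π j ^ 2 - 4 * k) := by
      simp [legendreSym, π]
    exact if_congr hunit (by rw [hleg]) rfl
  unfold Tpp
  rw [sum_mul_natCard_fiber (· ^ 2), sum_filter, sum_congr rfl fun j _ => hterm j,
    ZMod.sum_comp_castHom _ g, sum_filter, pow_succ, Nat.mul_div_cancel _ (Fact.out : ℓ.Prime).pos,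
    nsmul_eq_mul]
  push_cast
  rfl

section Legendre

variable (p : ℕ) [Fact p.Prime]

lemma legendreSym_sq_eq_ite (a : ℤ) : legendreSym p a ^ 2 = if (p : ℤ) ∣ a then 0 else 1 := by
  split_ifs with h
  · rw [(legendreSym.eq_zero_iff p a).mpr ((ZMod.intCast_zmod_eq_zero_iff_dvd a p).mpr h)]
    norm_num
  · exact legendreSym.sq_one p ((ZMod.intCast_zmod_eq_zero_iff_dvd a p).not.mpr h)

lemma not_dvd_and_legendreSym_eq_one_of_dvd_sq_mul_sub_one {m k : ℕ} (hN : 1 ≤ m ^ 2 * k)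
    (h : p ∣ m ^ 2 * k - 1) : ¬p ∣ m ∧ legendreSym p k = 1 := by
  have h1 : (m : ZMod p) ^ 2 * k = 1 := by
    have h0 := (ZMod.natCast_eq_zero_iff _ p).mpr h
    push_cast [Nat.cast_sub hN] at h0
    exact sub_eq_zero.mp h0
  refine ⟨fun hpm => ?_, ?_⟩
  · simp [(ZMod.natCast_eq_zero_iff m p).mpr hpm] at h1
  · simpa [legendreSym] using quadraticChar_eq_one_of_sq_mul_eq_one h1

end Legendre

lemma Tpp_succ_eq (m k ℓ : ℕ) [Fact ℓ.Prime] (hℓ : ¬ℓ ∣ 2 * k) (w : ℕ) :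
    Tpp m k ℓ (w + 1) = ℓ ^ w * ((if Even w then -1 else ℓ - 1 - legendreSym ℓ k) -
      legendreSym ℓ m ^ 2 * legendreSym ℓ (m ^ 2 * k - 1) ^ 2) := by
  have hchar : ringChar (ZMod ℓ) ≠ 2 := by
    rw [ZMod.ringChar_zmod_n]; rintro rfl; exact hℓ (dvd_mul_right 2 k)
  have h2k : (2 * k : ZMod ℓ) ≠ 0 := by exact_mod_cast (ZMod.natCast_eq_zero_iff _ ℓ).not.mpr hℓ
  have h4k : (4 * k : ZMod ℓ) = 2 ^ 2 * k := by ring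
  have h4k0 : (4 * k : ZMod ℓ) ≠ 0 := by
    rw [show (4 * k : ZMod ℓ) = 2 * (2 * k) by ring]; exact mul_ne_zero (Ring.two_ne_zero hchar) h2k
  rw [Tpp_succ_eq_pow_mul_sum, sum_quadraticChar_pow_filter_ne_zero _ _ (Nat.add_one_ne_zero w),
    sum_quadraticChar_sq_sub_pow_succ hchar h4k0, ZMod.card, h4k, map_mul,
    quadraticChar_sq_one' (Ring.two_ne_zero hchar), one_mul]
  simp [legendreSym]

lemma Tpp_succ_eq_ite {m k ℓ : ℕ} [Fact ℓ.Prime] (hN : 1 ≤ m ^ 2 * k) (hℓ : ¬ℓ ∣ 2 * k) (w : ℕ) :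
    (Tpp m k ℓ (w + 1) : ℝ) = ℓ ^ w * ((if Even w then -1 else (ℓ : ℝ) - 1 - legendreSym ℓ k) -
      (if ℓ ∣ m then 0 else 1) * (if ℓ ∣ m ^ 2 * k - 1 then 0 else 1)) := by
  have hNcast : ((m ^ 2 * k - 1 : ℕ) : ℤ) = (m : ℤ) ^ 2 * k - 1 := by
    push_cast [Nat.cast_sub hN]; ring
  rw [Tpp_succ_eq m k ℓ hℓ w, legendreSym_sq_eq_ite, legendreSym_sq_eq_ite, ← hNcast]
  push_cast [Int.natCast_dvd_natCast]
  split_ifs <;> rfl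

theorem formula_for_P_general (m k : ℕ) (hm : 1 ≤ m)
    (ℓ : ℕ) [Fact ℓ.Prime] (hℓ : ¬ℓ ∣ 2 * k) :
    HasSum
      (fun w : ℕ =>
        (Tpp m k ℓ (w + 1) : ℝ) /
          ((ℓ : ℝ) ^ (2 * (w + 1) - 1) * ((ℓ : ℝ) - if ℓ ∣ m then 0 else 1)))
      (((ℓ : ℝ) ^ 3 - (if ℓ ∣ m then 0 else 1) * (ℓ : ℝ) ^ 2 -
          (1 + (if ℓ ∣ m then 0 else 1) * (if ℓ ∣ m ^ 2 * k - 1 then 0 else 1)) * ℓ -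
          1 - (if ℓ ∣ m ^ 2 * k - 1 then 0 else 1) * (legendreSym ℓ k : ℝ)) /
        ((((ℓ : ℝ) ^ 2 - 1) * ((ℓ : ℝ) - if ℓ ∣ m then 0 else 1))) - 1) := by
  have hN : 1 ≤ m ^ 2 * k := by
    have : k ≠ 0 := by rintro rfl; exact hℓ (dvd_zero ℓ)
    exact Nat.one_le_iff_ne_zero.mpr (by positivity)
  set εm : ℝ := if ℓ ∣ m then 0 else 1 with hεm
  set εN : ℝ := if ℓ ∣ m ^ 2 * k - 1 then 0 else 1 with hεN
  have hrel : ((legendreSym ℓ k : ℝ) - εm) * (1 - εN) = 0 := by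
    by_cases h : ℓ ∣ m ^ 2 * k - 1
    · obtain ⟨hℓm, hk⟩ := not_dvd_and_legendreSym_eq_one_of_dvd_sq_mul_sub_one ℓ hN h
      simp [εm, εN, h, hℓm, hk]
    · simp [εN, h]
  have hL : (1 : ℝ) < ℓ := by exact_mod_cast (Fact.out : ℓ.Prime).one_lt
  have hL2 : (ℓ : ℝ) ^ 2 - 1 ≠ 0 := by nlinarith
  have hD : (ℓ : ℝ) - εm ≠ 0 := by
    simp only [εm]; split_ifs <;> linarith
  have hterm (w : ℕ) : (Tpp m k ℓ (w + 1) : ℝ) / ((ℓ : ℝ) ^ (2 * (w + 1) - 1) * (ℓ - εm)) =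
      (if Even w then -1 - εm * εN else ℓ - 1 - legendreSym ℓ k - εm * εN) / ℓ ^ (w + 1) /
        (ℓ - εm) := by
    rw [Tpp_succ_eq_ite hN hℓ w, ← hεm, ← hεN, show 2 * (w + 1) - 1 = w + (w + 1) by omega,
      pow_add]
    split_ifs <;> field_simp
  have hval : ((ℓ : ℝ) ^ 3 - εm * ℓ ^ 2 - (1 + εm * εN) * ℓ - 1 - εN * legendreSym ℓ k) /
        ((ℓ ^ 2 - 1) * (ℓ - εm)) - 1 =
      ((-1 - εm * εN) * ℓ + (ℓ - 1 - legendreSym ℓ k - εm * εN)) / (ℓ ^ 2 - 1) / (ℓ - εm) := by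
    field_simp
    linear_combination hrel
  rw [hval]
  exact ((hasSum_ite_even_div_pow hL _ _).div_const (ℓ - εm)).congr_fun hterm

theorem formula_for_P (m k : ℕ) (hm : 1 ≤ m) (hk : 1 ≤ k)
    (ℓ : ℕ) [Fact ℓ.Prime] (hℓ : ¬ℓ ∣ 2 * k) :
    HasSum
      (fun w : ℕ =>
        (Tpp m k ℓ (w + 1) : ℝ) /
          ((ℓ : ℝ) ^ (2 * (w + 1) - 1) * ((ℓ : ℝ) - if ℓ ∣ m then 0 else 1)))
      (((ℓ : ℝ) ^ 3 - (if ℓ ∣ m then 0 else 1) * (ℓ : ℝ) ^ 2 -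
          (1 + (if ℓ ∣ m then 0 else 1) * (if ℓ ∣ m ^ 2 * k - 1 then 0 else 1)) * ℓ -
          1 - (if ℓ ∣ m ^ 2 * k - 1 then 0 else 1) * (legendreSym ℓ k : ℝ)) /
        ((((ℓ : ℝ) ^ 2 - 1) * ((ℓ : ℝ) - if ℓ ∣ m then 0 else 1))) - 1) :=
  formula_for_P_general m k hm ℓ hℓ
end

section
/- Let m, k be positive integers. For integers v ≥ 0 and r ∈ {0, 1, 4, 5}, let J_r(v) = { 1 ≤ j ≤ 2^{2v+3} : (j − mk)² ≡ 4k + 4^v·r (mod 2^{2v+3}) and j·m ≡ 0 (mod 2) }. Let v₀ = 2 if m is odd and v₀ = 3 if m is even, set 𝒥(v) = 2^{1−v₀} · ( |J_0(v)|/2 + |J_1(v)|/1 + |J_4(v)|/2 + |J_5(v)|/3 ), and 𝒥 = Σ_{v ≥ 0, gcd(2^v, k) = 1} 𝒥(v)/8^v (so the sum is only the v = 0 term when k is even). Then 𝒥 = 2/3 if both m and k are odd; 𝒥 = 3/2 if both m and k are even; and 𝒥 = 1 if exactly one of m, k is even. -/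
open scoped Classical

/-- `|J_r(v)| = #{1 ≤ j ≤ 2^{2v+3} : (j − mk)² ≡ 4k + 4^v r (mod 2^{2v+3}), 2 ∣ jm}`. -/
noncomputable def Jcard (m k v r : ℕ) : ℕ :=
  ((Finset.Icc 1 (2 ^ (2 * v + 3))).filter fun j =>
    ((j : ℤ) - m * k) ^ 2 ≡ 4 * k + 4 ^ v * r [ZMOD (2 ^ (2 * v + 3) : ℕ)] ∧ 2 ∣ j * m).card

/-- `𝒥(v) = 2^{1−v₀} (|J₀(v)|/2 + |J₁(v)| + |J₄(v)|/2 + |J₅(v)|/3)` where `v₀ = 2` for odd `m`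
and `v₀ = 3` for even `m`; the weights are `2 − (r/2)` for the Kronecker symbol `(r/2)`. -/
noncomputable def Jv (m k v : ℕ) : ℝ :=
  (1 / 2 ^ ((if 2 ∣ m then 3 else 2) - 1 : ℕ)) *
    ((Jcard m k v 0 : ℝ) / 2 + (Jcard m k v 1 : ℝ) / 1 +
      (Jcard m k v 4 : ℝ) / 2 + (Jcard m k v 5 : ℝ) / 3)

/-- `𝒥 = Σ_{v ≥ 0, gcd(2^v, k) = 1} 𝒥(v)/8^v`. -/
noncomputable def Jtotal (m k : ℕ) : ℝ :=
  ∑' v : ℕ, if Nat.gcd (2 ^ v) k = 1 then Jv m k v / 8 ^ v else 0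

open Finset

/-!
Substituting `x = j - m k` turns `J_r(v)` into the set of square roots of `c = 4k + 4^v r`
modulo `2^(2v+3)`; since `x ≡ x² ≡ c (mod 2)`, the side condition `2 ∣ j m` becomes
`2 ∣ m (4^v r + k)`, which does not depend on `j`. So `|J_r(v)|` depends only on `m mod 2` and
`k mod 2^(2v+1)`, which settles `v ≤ 1` by direct computation. For even `k` only `v = 0`
contributes, and for odd `m` and `k` the parity condition fails for every `v ≥ 1`. In the
remaining case (`m` even, `k` odd, `v ≥ 2`) we have `c = 4u` with `u` odd: if `s² ≡ u` modulo
`2^(n+3)` (a Hensel lift, which exists iff `u ≡ 1 mod 8`), the solutions of `x² = 4u` modulo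
`2^(n+5)` are exactly the residues `≡ ±2s` modulo `2^(n+3)`, eight in all. Summing the resulting
geometric series gives the three values.
-/

theorem card_filter_Icc_intCast (N : ℕ) [NeZero N] (p : ZMod N → Prop) [DecidablePred p] :
    #{j ∈ Icc (1 : ℤ) N | p (j : ℤ)} = #{x : ZMod N | p x} := by
  refine card_nbij' (fun j => (j : ZMod N)) (fun x => ((x - 1).val + 1 : ℤ)) ?_ ?_ ?_ ?_
  · intro j hj
    simp_all
  · intro x hx
    simp only [coe_filter, mem_univ, true_and, mem_Icc] at hx ⊢
    refine ⟨⟨by omega, by exact_mod_cast (x - 1).val_lt⟩, ?_⟩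
    push_cast
    simpa using hx
  · intro j hj
    obtain ⟨⟨hj1, hjN⟩, -⟩ : (1 ≤ j ∧ j ≤ N) ∧ p j := by simpa using hj
    have h := ZMod.val_intCast (n := N) (j - 1)
    push_cast at h
    dsimp only
    rw [h, Int.emod_eq_of_lt (by omega) (by omega)]
    omega
  · intro x _
    simp

theorem card_filter_sub_const {R : Type*} [AddGroup R] [Fintype R] (p : R → Prop)
    [DecidablePred p] (a : R) : #{x | p (x - a)} = #{x | p x} :=
  card_nbij' (· - a) (· + a) (fun x hx => by simpa using hx) (fun x hx => by simpa using hx)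
    (fun x _ => by simp) (fun x _ => by simp)

theorem card_filter_castHom_eq {m n : ℕ} [NeZero n] (h : m ∣ n) (y : ZMod m) :
    #{x : ZMod n | ZMod.castHom h (ZMod m) x = y} = n / m := by
  have : NeZero m := ⟨fun hm => NeZero.ne n (Nat.eq_zero_of_zero_dvd (hm ▸ h))⟩
  let f := (ZMod.castHom h (ZMod m)).toAddMonoidHom
  have hfib : ∀ z, #{x : ZMod n | f x = z} = #{x : ZMod n | f x = y} := fun z =>
    AddMonoidHom.card_fiber_eq_of_mem_range f (ZMod.castHom_surjective h z)
      (ZMod.castHom_surjective h y)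
  have hsum := card_eq_sum_card_fiberwise (f := f) (s := univ) (t := univ)
    fun _ _ => mem_coe.2 (mem_univ _)
  simp only [hfib, sum_const, card_univ, ZMod.card, smul_eq_mul] at hsum
  exact (Nat.div_eq_of_eq_mul_right (Nat.pos_of_ne_zero (NeZero.ne m)) hsum).symm

theorem odd_of_two_pow_dvd_sq_sub {n : ℕ} {u s : ℤ} (hu : Odd u) (h : 2 ^ (n + 1) ∣ s ^ 2 - u) :
    Odd s := by
  obtain ⟨d, hd⟩ := h
  refine (Int.odd_pow' two_ne_zero).1 ?_
  rw [show s ^ 2 = u + 2 * (2 ^ n * d) by linear_combination hd]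
  exact hu.add_even (even_two_mul _)

theorem exists_two_pow_dvd_sq_sub {u : ℤ} (hu : u % 8 = 1) (n : ℕ) :
    ∃ s : ℤ, 2 ^ (n + 3) ∣ s ^ 2 - u := by
  induction n with
  | zero => exact ⟨1, by norm_num; omega⟩
  | succ n ih =>
    obtain ⟨s, hs⟩ := ih
    obtain ⟨e, rfl⟩ := odd_of_two_pow_dvd_sq_sub (Int.odd_iff.2 (by omega)) hs
    obtain ⟨d, hd⟩ := hs
    -- Newton step: the correction `d * 2 ^ (n + 2)` kills the error term `2 ^ (n + 3) * d`
    refine ⟨2 * e + 1 + d * 2 ^ (n + 2), d * (e + 1) + d ^ 2 * 2 ^ n, ?_⟩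
    linear_combination hd

theorem two_pow_dvd_sub_or_add_of_sq_sub_sq {b s : ℤ} (hb : Odd b) (hs : Odd s) {n : ℕ}
    (h : 2 ^ (n + 1) ∣ b ^ 2 - s ^ 2) : 2 ^ n ∣ b - s ∨ 2 ^ n ∣ b + s := by
  have cancel : ∀ a t : ℤ, Odd a → 2 ^ (n + 1) ∣ a * (2 * t) → 2 ^ n ∣ t := fun a t ha hat => by
    have hcop : IsCoprime ((2 : ℤ) ^ (n + 1)) a :=
      (Int.prime_two.coprime_iff_not_dvd.2 (Int.two_dvd_ne_zero.2 (Int.odd_iff.1 ha))).pow_left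
    have := hcop.dvd_of_dvd_mul_left hat
    rw [pow_succ'] at this
    exact (mul_dvd_mul_iff_left two_ne_zero).1 this
  obtain ⟨β, rfl⟩ := hb
  obtain ⟨σ, rfl⟩ := hs
  -- the halves `β - σ` and `β + σ + 1` of `b ∓ s` add up to the odd number `2β + 1`
  rcases Int.even_or_odd (β - σ) with ⟨a, ha⟩ | hodd
  · refine .inl (cancel (β + σ + 1) _ ?_ ?_)
    · rw [Int.odd_iff]; omega
    · convert h using 1; ring
  · refine .inr (cancel (β - σ) _ hodd ?_)
    convert h using 1; ring

theorem exists_odd_half_of_two_pow_dvd_sq_sub_four_mul {n : ℕ} {u X : ℤ} (hu : Odd u)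
    (h : 2 ^ (n + 5) ∣ X ^ 2 - 4 * u) : ∃ b, Odd b ∧ X = 2 * b ∧ 2 ^ (n + 3) ∣ b ^ 2 - u := by
  obtain ⟨c, hc⟩ := h
  obtain ⟨b, rfl⟩ : Even X :=
    (Int.even_pow' two_ne_zero).1 ⟨2 * u + 2 ^ (n + 4) * c, by linear_combination hc⟩
  have hb : b ^ 2 - u = 2 ^ (n + 3) * c :=
    mul_left_cancel₀ four_ne_zero (by linear_combination hc)
  exact ⟨b, odd_of_two_pow_dvd_sq_sub hu ⟨c, hb⟩, (two_mul b).symm, c, hb⟩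

theorem two_pow_dvd_sq_sub_four_mul_iff {n : ℕ} {u s : ℤ} (hu : Odd u)
    (hs : 2 ^ (n + 3) ∣ s ^ 2 - u) (X : ℤ) :
    2 ^ (n + 5) ∣ X ^ 2 - 4 * u ↔ 2 ^ (n + 3) ∣ X - 2 * s ∨ 2 ^ (n + 3) ∣ X + 2 * s := by
  obtain ⟨d, hd⟩ := hs
  constructor
  · intro h
    obtain ⟨b, hb, rfl, c, hc⟩ := exists_odd_half_of_two_pow_dvd_sq_sub_four_mul hu h
    have := two_pow_dvd_sub_or_add_of_sq_sub_sq (n := n + 2) hb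
      (odd_of_two_pow_dvd_sq_sub hu ⟨d, hd⟩) ⟨c - d, by linear_combination hc - hd⟩
    rw [← mul_sub, ← mul_add, pow_succ']
    exact this.imp (mul_dvd_mul_left 2) (mul_dvd_mul_left 2)
  · rintro (⟨t, ht⟩ | ⟨t, ht⟩)
    · exact ⟨d + s * t + 2 ^ (n + 1) * t ^ 2, by
        rw [show X = 2 * s + 2 ^ (n + 3) * t by linear_combination ht]; linear_combination 4 * hd⟩
    · exact ⟨d - s * t + 2 ^ (n + 1) * t ^ 2, by
        rw [show X = -2 * s + 2 ^ (n + 3) * t by linear_combination ht]; linear_combination 4 * hd⟩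

theorem card_sq_eq_four_mul {n : ℕ} {u : ℤ} (hu : Odd u) :
    #{x : ZMod (2 ^ (n + 5)) | x ^ 2 = 4 * u} = if u % 8 = 1 then 8 else 0 := by
  have hcast : ∀ (M : ℕ) (a b : ℤ), (a : ZMod M) = b ↔ (M : ℤ) ∣ a - b := fun M a b => by
    rw [← sub_eq_zero, ← Int.cast_sub, ZMod.intCast_zmod_eq_zero_iff_dvd]
  have hdvd : ∀ X : ℤ, (X : ZMod (2 ^ (n + 5))) ^ 2 = 4 * u ↔ 2 ^ (n + 5) ∣ X ^ 2 - 4 * u :=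
    fun X => by exact_mod_cast hcast (2 ^ (n + 5)) (X ^ (2 : ℕ)) (4 * u)
  split_ifs with h8
  · obtain ⟨s, hs⟩ := exists_two_pow_dvd_sq_sub h8 n
    let π := ZMod.castHom (pow_dvd_pow 2 (by omega : n + 3 ≤ n + 5)) (ZMod (2 ^ (n + 3)))
    have hroots : ∀ x, x ^ 2 = 4 * (u : ZMod (2 ^ (n + 5))) ↔ π x = 2 * s ∨ π x = -(2 * s) := by
      intro x
      obtain ⟨X, rfl⟩ := ZMod.intCast_surjective x
      rw [hdvd, two_pow_dvd_sq_sub_four_mul_iff hu hs, map_intCast]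
      exact_mod_cast or_congr (hcast (2 ^ (n + 3)) X (2 * s)).symm (by
        simpa using (hcast (2 ^ (n + 3)) X (-(2 * s))).symm)
    have hne : (2 * s : ZMod (2 ^ (n + 3))) ≠ -(2 * s) := by
      intro h
      have h4 := (hcast (2 ^ (n + 3)) (2 * s) (-(2 * s))).1 (by exact_mod_cast h)
      rw [show 2 * s - -(2 * s) = 4 * s by ring] at h4
      push_cast at h4
      have h8 : (8 : ℤ) ∣ 4 * s := (pow_dvd_pow 2 (by omega : 3 ≤ n + 3)).trans h4
      obtain ⟨e, he⟩ := odd_of_two_pow_dvd_sq_sub hu hs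
      omega
    rw [filter_congr fun x _ => hroots x, filter_or, card_union_of_disjoint
      (disjoint_filter.2 fun x _ h1 h2 => hne (h1.symm.trans h2)), card_filter_castHom_eq,
      card_filter_castHom_eq, pow_add, pow_add, Nat.mul_div_mul_left _ _ (by positivity)]
    norm_num
  · rw [card_eq_zero, filter_eq_empty_iff]
    intro x _ hx
    obtain ⟨X, rfl⟩ := ZMod.intCast_surjective x
    obtain ⟨b, hb, -, hbu⟩ := exists_odd_half_of_two_pow_dvd_sq_sub_four_mul hu ((hdvd X).1 hx)
    have h8 : (8 : ℤ) ∣ b ^ 2 - u := (pow_dvd_pow 2 (by omega : 3 ≤ n + 3)).trans hbu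
    have := Int.eight_dvd_sq_sub_one_of_odd hb
    omega

theorem two_dvd_mul_iff_of_sq_modEq {j m k c N : ℤ} (hN : 2 ∣ N)
    (h : (j - m * k) ^ 2 ≡ 4 * k + c [ZMOD N]) : 2 ∣ j * m ↔ 2 ∣ m * (c + k) := by
  have key : ∀ j m k c : ZMod 2, (j - m * k) ^ 2 = 4 * k + c → (j * m = 0 ↔ m * (c + k) = 0) := by
    decide
  have h2 := (ZMod.intCast_eq_intCast_iff' _ _ 2).2 (h.of_dvd hN)
  have two_dvd : ∀ a : ℤ, 2 ∣ a ↔ (a : ZMod 2) = 0 := fun a => by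
    simpa using (ZMod.intCast_zmod_eq_zero_iff_dvd a 2).symm
  push_cast at h2
  rw [two_dvd, two_dvd]
  push_cast
  exact key _ _ _ _ h2

theorem Jcard_eq_ite (m k v r : ℕ) :
    Jcard m k v r = if 2 ∣ m * (4 ^ v * r + k)
      then #{x : ZMod (2 ^ (2 * v + 3)) | x ^ 2 = 4 * k + 4 ^ v * r} else 0 := by
  have hN : (2 : ℤ) ∣ ((2 ^ (2 * v + 3) : ℕ) : ℤ) := by push_cast; exact dvd_pow_self 2 (by omega)
  have hpar : ∀ j : ℤ, (j - m * k) ^ 2 ≡ 4 * k + 4 ^ v * r [ZMOD (2 ^ (2 * v + 3) : ℕ)] →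
      (2 ∣ j * m ↔ 2 ∣ m * (4 ^ v * r + k)) := fun j hj => by
    exact_mod_cast two_dvd_mul_iff_of_sq_modEq hN hj
  rw [Jcard]
  split_ifs with h
  · rw [filter_congr fun j _ => and_iff_left_of_imp fun hj => (hpar j hj).2 h]
    simp_rw [← ZMod.intCast_eq_intCast_iff]
    push_cast
    rw [← card_filter_sub_const _ (m * k : ZMod (2 ^ (2 * v + 3))), ← card_filter_Icc_intCast]
    push_cast
    rfl
  · rw [card_eq_zero, filter_eq_empty_iff]
    exact fun j _ hj => h ((hpar j hj.1).1 hj.2)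

theorem Jcard_congr {m m' k k' : ℕ} (v r : ℕ) (hm : m ≡ m' [MOD 2])
    (hk : k ≡ k' [MOD 2 ^ (2 * v + 1)]) : Jcard m k v r = Jcard m' k' v r := by
  have hpar : 2 ∣ m * (4 ^ v * r + k) ↔ 2 ∣ m' * (4 ^ v * r + k') :=
    (hm.mul ((hk.of_dvd (dvd_pow_self 2 (by omega))).add_left _)).dvd_iff dvd_rfl
  have h4k : (4 * k : ZMod (2 ^ (2 * v + 3))) = 4 * k' := by
    have := hk.mul_left' 4
    rw [show 4 * 2 ^ (2 * v + 1) = 2 ^ (2 * v + 3) by ring] at this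
    exact_mod_cast (ZMod.natCast_eq_natCast_iff _ _ _).2 this
  simp only [Jcard_eq_ite, hpar, h4k]

theorem Jv_congr {m m' k k' : ℕ} (v : ℕ) (hm : m ≡ m' [MOD 2])
    (hk : k ≡ k' [MOD 2 ^ (2 * v + 1)]) : Jv m k v = Jv m' k' v := by
  simp only [Jv, Jcard_congr v _ hm hk, (hm.dvd_iff dvd_rfl : 2 ∣ m ↔ 2 ∣ m')]

theorem Jv_zero (m k : ℕ) :
    Jv m k 0 =
      if 2 ∣ m then (if 2 ∣ k then 3 / 2 else 5 / 6) else (if 2 ∣ k then 1 else 2 / 3) := by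
  rw [Jv_congr 0 (Nat.mod_modEq m 2).symm (Nat.mod_modEq k 2).symm]
  rcases Nat.mod_two_eq_zero_or_one m with hm | hm <;>
    rcases Nat.mod_two_eq_zero_or_one k with hk | hk <;>
    simp only [Nat.dvd_iff_mod_eq_zero, hm, hk] <;> norm_num
  · have : Jcard 0 0 0 0 = 2 ∧ Jcard 0 0 0 1 = 4 ∧ Jcard 0 0 0 4 = 2 ∧ Jcard 0 0 0 5 = 0 := by
      decide
    norm_num [Jv, this]
  · have : Jcard 0 1 0 0 = 2 ∧ Jcard 0 1 0 1 = 0 ∧ Jcard 0 1 0 4 = 2 ∧ Jcard 0 1 0 5 = 4 := by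
      decide
    norm_num [Jv, this]
  · have : Jcard 1 0 0 0 = 2 ∧ Jcard 1 0 0 1 = 0 ∧ Jcard 1 0 0 4 = 2 ∧ Jcard 1 0 0 5 = 0 := by
      decide
    norm_num [Jv, this]
  · have : Jcard 1 1 0 0 = 0 ∧ Jcard 1 1 0 1 = 0 ∧ Jcard 1 1 0 4 = 0 ∧ Jcard 1 1 0 5 = 4 := by
      decide
    norm_num [Jv, this]

theorem Jv_one_of_two_dvd {m k : ℕ} (hm : 2 ∣ m) (hk : ¬ 2 ∣ k) :
    Jv m k 1 = if k % 4 = 1 then 1 else 4 / 3 := by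
  rw [Jv_congr 1 (Nat.modEq_zero_iff_dvd.2 hm) (Nat.mod_modEq k 8).symm]
  have : k % 8 = 1 ∨ k % 8 = 3 ∨ k % 8 = 5 ∨ k % 8 = 7 := by omega
  rcases this with h | h | h | h <;> rw [h]
  · have : Jcard 0 1 1 0 = 8 ∧ Jcard 0 1 1 1 = 0 ∧ Jcard 0 1 1 4 = 0 ∧ Jcard 0 1 1 5 = 0 := by
      decide
    norm_num [Jv, this, if_pos (show k % 4 = 1 by omega)]
  · have : Jcard 0 3 1 0 = 0 ∧ Jcard 0 3 1 1 = 4 ∧ Jcard 0 3 1 4 = 0 ∧ Jcard 0 3 1 5 = 4 := by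
      decide
    norm_num [Jv, this, if_neg (show k % 4 ≠ 1 by omega)]
  · have : Jcard 0 5 1 0 = 0 ∧ Jcard 0 5 1 1 = 0 ∧ Jcard 0 5 1 4 = 8 ∧ Jcard 0 5 1 5 = 0 := by
      decide
    norm_num [Jv, this, if_pos (show k % 4 = 1 by omega)]
  · have : Jcard 0 7 1 0 = 0 ∧ Jcard 0 7 1 1 = 4 ∧ Jcard 0 7 1 4 = 0 ∧ Jcard 0 7 1 5 = 4 := by
      decide
    norm_num [Jv, this, if_neg (show k % 4 ≠ 1 by omega)]

theorem Jcard_add_two_of_two_dvd {m k : ℕ} (hm : 2 ∣ m) (hk : ¬ 2 ∣ k) (w r : ℕ) :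
    Jcard m k (w + 2) r = if (k + 4 ^ (w + 1) * r) % 8 = 1 then 8 else 0 := by
  have hu : Odd ((k + 4 ^ (w + 1) * r : ℕ) : ℤ) := by
    have : 2 ∣ 4 ^ (w + 1) * r := dvd_mul_of_dvd_left (dvd_pow (by norm_num) (by omega)) r
    rw [Int.odd_coe_nat, Nat.odd_iff]
    omega
  have hcard := card_sq_eq_four_mul (n := 2 * w + 2) hu
  rw [show 2 * w + 2 + 5 = 2 * (w + 2) + 3 by ring] at hcard
  have hc : (4 * k + 4 ^ (w + 2) * r : ZMod (2 ^ (2 * (w + 2) + 3))) =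
      4 * (((k + 4 ^ (w + 1) * r : ℕ) : ℤ) : ZMod _) := by push_cast; ring
  rw [Jcard_eq_ite, if_pos (dvd_mul_of_dvd_left hm _), hc, hcard]
  norm_cast

theorem Jv_two_of_two_dvd {m k : ℕ} (hm : 2 ∣ m) (hk : ¬ 2 ∣ k) :
    Jv m k 2 = if k % 8 = 1 then 2 else if k % 8 = 5 then 8 / 3 else 0 := by
  have : k % 8 = 1 ∨ k % 8 = 3 ∨ k % 8 = 5 ∨ k % 8 = 7 := by omega
  simp only [Jv, if_pos hm, Jcard_add_two_of_two_dvd hm hk]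
  rcases this with h | h | h | h <;> simp [Nat.add_mod, h] <;> norm_num

theorem Jv_add_three_of_two_dvd {m k : ℕ} (hm : 2 ∣ m) (hk : ¬ 2 ∣ k) (w : ℕ) :
    Jv m k (w + 3) = if k % 8 = 1 then 14 / 3 else 0 := by
  have hr : ∀ r, (k + 4 ^ (w + 1 + 1) * r) % 8 = k % 8 := fun r => by
    rw [show 4 ^ (w + 1 + 1) * r = 8 * (2 * 4 ^ w * r) by ring, Nat.add_mul_mod_self_left]
  simp only [Jv, if_pos hm, Jcard_add_two_of_two_dvd hm hk (w + 1), hr]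
  split_ifs <;> norm_num

theorem Jv_eq_zero_of_not_two_dvd {m k v : ℕ} (hm : ¬ 2 ∣ m) (hk : ¬ 2 ∣ k) (hv : v ≠ 0) :
    Jv m k v = 0 := by
  have hJ : ∀ r, Jcard m k v r = 0 := fun r => by
    have h4 : 2 ∣ 4 ^ v * r := dvd_mul_of_dvd_left (dvd_pow (by norm_num) hv) r
    rw [Jcard_eq_ite, if_neg fun h => (Nat.prime_two.dvd_mul.1 h).elim hm
      fun h' => hk ((Nat.dvd_add_right h4).1 h')]
  simp [Jv, hJ]

theorem tsum_eq_sum_range_add_geometric {f : ℕ → ℝ} {n : ℕ} {a q : ℝ} (hq₀ : 0 ≤ q)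
    (hq₁ : q < 1) (h : ∀ w, f (w + n) = a * q ^ w) :
    ∑' v, f v = ∑ i ∈ range n, f i + a * (1 - q)⁻¹ := by
  have hs : Summable f := (summable_nat_add_iff n).1 <|
    ((summable_geometric_of_lt_one hq₀ hq₁).mul_left a).congr fun w => (h w).symm
  rw [← hs.sum_add_tsum_nat_add n, tsum_congr h, tsum_mul_left, tsum_geometric_of_lt_one hq₀ hq₁]

theorem Jtotal_eq_Jv_zero {m k : ℕ} (h : ∀ v ≠ 0, Nat.Coprime (2 ^ v) k → Jv m k v = 0) :
    Jtotal m k = Jv m k 0 := by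
  rw [Jtotal, tsum_eq_single 0 fun v hv => ?_]
  · simp
  · split_ifs with hcop
    · rw [h v hv hcop, zero_div]
    · rfl

theorem Jtotal_of_two_dvd_right {m k : ℕ} (hk : 2 ∣ k) : Jtotal m k = Jv m k 0 :=
  Jtotal_eq_Jv_zero fun v hv hcop => by
    rw [Nat.coprime_pow_left_iff (Nat.pos_of_ne_zero hv), Nat.coprime_two_left] at hcop
    exact absurd hk (by have := Nat.odd_iff.1 hcop; omega)

theorem Jtotal_of_two_dvd_of_not_two_dvd {m k : ℕ} (hm : 2 ∣ m) (hk : ¬ 2 ∣ k) :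
    Jtotal m k = 1 := by
  have hcop : ∀ v, Nat.Coprime (2 ^ v) k := fun v =>
    (Nat.coprime_two_left.2 (Nat.odd_iff.2 (by omega))).pow_left v
  rw [Jtotal, tsum_eq_sum_range_add_geometric (n := 3) (q := 1 / 8) (by norm_num) (by norm_num)
    (a := (if k % 8 = 1 then 14 / 3 else 0) / 8 ^ 3) fun w => ?_]
  · simp only [sum_range_succ, sum_range_zero, if_pos (hcop _), Jv_zero, if_pos hm, if_neg hk,
      Jv_one_of_two_dvd hm hk, Jv_two_of_two_dvd hm hk]
    have : k % 8 = 1 ∨ k % 8 = 3 ∨ k % 8 = 5 ∨ k % 8 = 7 := by omega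
    rcases this with h | h | h | h <;> simp [h, show k % 4 = k % 8 % 4 by omega] <;> norm_num
  · rw [if_pos (hcop _), Jv_add_three_of_two_dvd hm hk, pow_add, one_div_pow]
    ring

theorem formula_for_J_general (m k : ℕ) :
    (¬2 ∣ m ∧ ¬2 ∣ k → Jtotal m k = 2 / 3) ∧
    (2 ∣ m ∧ 2 ∣ k → Jtotal m k = 3 / 2) ∧
    ((2 ∣ m ∧ ¬2 ∣ k) ∨ (¬2 ∣ m ∧ 2 ∣ k) → Jtotal m k = 1) := by
  refine ⟨fun ⟨hm, hk⟩ => ?_, fun ⟨hm, hk⟩ => ?_, ?_⟩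
  · rw [Jtotal_eq_Jv_zero fun v hv _ => Jv_eq_zero_of_not_two_dvd hm hk hv, Jv_zero,
      if_neg hm, if_neg hk]
  · rw [Jtotal_of_two_dvd_right hk, Jv_zero, if_pos hm, if_pos hk]
  · rintro (⟨hm, hk⟩ | ⟨hm, hk⟩)
    · exact Jtotal_of_two_dvd_of_not_two_dvd hm hk
    · rw [Jtotal_of_two_dvd_right hk, Jv_zero, if_neg hm, if_pos hk]

theorem formula_for_J (m k : ℕ) (hm : 1 ≤ m) (hk : 1 ≤ k) :
    (¬2 ∣ m ∧ ¬2 ∣ k → Jtotal m k = 2 / 3) ∧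
    (2 ∣ m ∧ 2 ∣ k → Jtotal m k = 3 / 2) ∧
    ((2 ∣ m ∧ ¬2 ∣ k) ∨ (¬2 ∣ m ∧ 2 ∣ k) → Jtotal m k = 1) :=
  formula_for_J_general m k
end

section
/- Let ℓ be a prime, M a positive integer, r = ν_ℓ(M) the ℓ-adic valuation of M, and s ≥ 0 an integer. Then ℓ² · #{ σ ∈ Mat₂(ℤ/ℓ^{r+s}ℤ) : det(σ) ≡ M (mod ℓ^{r+s}) } = ℓ^{2r} · ( ℓ^{3s}·(ℓ+1)·(ℓ^{r+1} − 1) + δ(s) ), where δ(s) = 1 if s = 0 and δ(s) = 0 if s ≥ 1. Equivalently, the count equals ℓ^{2(r−1)}·(ℓ^{3s}(ℓ+1)(ℓ^{r+1}−1) + δ(s)). -/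
/-!
Count the matrices row by row. Call the content of a first row `(a, b)` the largest `c ≤ n`
with `p ^ c ∣ a` and `p ^ c ∣ b`. Since every element of `ℤ/p^nℤ` is `p ^ v` times a unit,
the additive map `(x, y) ↦ a y - b x` has image exactly the multiples of `p ^ c`, a subgroup of
order `p ^ (n - c)`; so `M` has `p ^ (n + c)` preimages if `c ≤ r` and none otherwise.
There are `(p ^ (n - c)) ^ 2` rows of content at least `c`, and summing the resulting geometric
series over `c ≤ r` gives the formula; the term `δ(s)` is the zero row, of content `n`, which
only counts when `r = n`.
-/

open Finset

theorem AddMonoidHom.card_fiber_mul_card_range {G H : Type*} [AddGroup G] [Fintype G]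
    [AddGroup H] [DecidableEq H] (f : G →+ H) {y : H} (hy : y ∈ f.range) :
    #{g | f g = y} * Nat.card f.range = Fintype.card G := by
  rw [card_fiber_eq_of_mem_range f hy ⟨0, map_zero f⟩, ← AddSubgroup.index_ker,
    ← Nat.card_eq_fintype_card, ← f.ker.card_mul_index, ← Fintype.card_subtype,
    ← Nat.card_eq_fintype_card]
  rfl

theorem Finset.card_filter_eq_add_card_filter_lt {α : Type*} [Fintype α] (f : α → ℕ) (k : ℕ) :
    #{x | f x = k} + #{x | k < f x} = #{x | k ≤ f x} := by
  classical
  rw [← card_union_of_disjoint (disjoint_filter.2 fun _ _ h => by omega), ← filter_or]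
  congr 1
  ext x
  simp only [mem_filter, mem_univ, true_and]
  omega

namespace ZMod

theorem mem_zmultiples_iff_dvd {N : ℕ} {x y : ZMod N} :
    y ∈ AddSubgroup.zmultiples x ↔ x ∣ y := by
  rw [AddSubgroup.mem_zmultiples_iff]
  constructor
  · rintro ⟨k, rfl⟩
    exact ⟨k, by rw [zsmul_eq_mul, mul_comm]⟩
  · rintro ⟨z, rfl⟩
    obtain ⟨k, rfl⟩ := intCast_surjective z
    exact ⟨k, by rw [zsmul_eq_mul, mul_comm]⟩

theorem card_natCast_dvd {N : ℕ} [NeZero N] (d : ℕ) :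
    #{y : ZMod N | (d : ZMod N) ∣ y} = N / N.gcd d := by
  rw [← addOrderOf_coe d (NeZero.ne N), ← Nat.card_zmultiples, ← Fintype.card_subtype,
    ← Nat.card_eq_fintype_card]
  exact Nat.card_congr (Equiv.subtypeEquivRight fun _ => mem_zmultiples_iff_dvd.symm)

theorem card_pow_dvd {p n k : ℕ} [NeZero p] (hk : k ≤ n) :
    #{y : ZMod (p ^ n) | (p : ZMod (p ^ n)) ^ k ∣ y} = p ^ (n - k) := by
  rw [← Nat.cast_pow, card_natCast_dvd, Nat.gcd_eq_right (pow_dvd_pow p hk),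
    Nat.pow_div hk (Nat.pos_of_ne_zero (NeZero.ne p))]

theorem natCast_dvd_natCast_iff {N d : ℕ} [NeZero N] (hd : d ∣ N) (M : ℕ) :
    (d : ZMod N) ∣ (M : ZMod N) ↔ d ∣ M := by
  refine ⟨fun ⟨z, hz⟩ => ?_, Nat.cast_dvd_cast⟩
  rw [← natCast_zmod_val z, ← Nat.cast_mul, natCast_eq_natCast_iff] at hz
  exact (hz.dvd_iff hd).2 (dvd_mul_right _ _)

theorem natCast_dvd_of_not_isUnit {p n : ℕ} [Fact p.Prime] {y : ZMod (p ^ n)}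
    (hy : ¬IsUnit y) : (p : ZMod (p ^ n)) ∣ y := by
  rw [← natCast_zmod_val y] at hy ⊢
  refine Nat.cast_dvd_cast (by_contra fun h => hy ?_)
  exact (isUnit_iff_coprime _ _).2
    (((Nat.Prime.coprime_iff_not_dvd Fact.out).2 h).pow_left n).symm

end ZMod

open Classical in
noncomputable def truncMultiplicity {M : Type*} [Monoid M] (π : M) (n : ℕ) (x : M) : ℕ :=
  Nat.findGreatest (fun k => π ^ k ∣ x) n

section truncMultiplicity

variable {M : Type*} [Monoid M] {π x : M} {n k : ℕ}

open Classical in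
theorem truncMultiplicity_le (π : M) (n : ℕ) (x : M) : truncMultiplicity π n x ≤ n :=
  Nat.findGreatest_le n

open Classical in
theorem pow_dvd_iff_le_truncMultiplicity (hk : k ≤ n) :
    π ^ k ∣ x ↔ k ≤ truncMultiplicity π n x := by
  refine ⟨Nat.le_findGreatest (P := fun k => π ^ k ∣ x) hk, fun h => (pow_dvd_pow π h).trans ?_⟩
  exact Nat.findGreatest_spec (P := fun k => π ^ k ∣ x) (Nat.zero_le n) (by simp)

end truncMultiplicity

theorem ZMod.associated_pow_truncMultiplicity {p n : ℕ} [Fact p.Prime] (x : ZMod (p ^ n)) :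
    Associated ((p : ZMod (p ^ n)) ^ truncMultiplicity (p : ZMod (p ^ n)) n x) x := by
  set v := truncMultiplicity (p : ZMod (p ^ n)) n x
  have hvn : v ≤ n := truncMultiplicity_le _ n x
  obtain ⟨y, hy⟩ := (pow_dvd_iff_le_truncMultiplicity hvn).2 le_rfl
  rcases hvn.eq_or_lt with hv | hv
  · have : (p : ZMod (p ^ n)) ^ v = 0 := by
      rw [hv, ← Nat.cast_pow, natCast_self]
    rw [hy, this, zero_mul]
  · rw [hy]
    refine associated_mul_unit_right _ _ (by_contra fun hu => ?_)
    obtain ⟨z, rfl⟩ := natCast_dvd_of_not_isUnit hu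
    have : (p : ZMod (p ^ n)) ^ (v + 1) ∣ x := ⟨z, by rw [hy, pow_succ, mul_assoc]⟩
    have := (pow_dvd_iff_le_truncMultiplicity hv).1 this
    omega

def detSecondRowHom {R : Type*} [CommRing R] (a b : R) : R × R →+ R where
  toFun cd := a * cd.2 - b * cd.1
  map_zero' := by simp
  map_add' _ _ := by simp only [Prod.fst_add, Prod.snd_add]; ring

theorem card_det_eq_sum {R : Type*} [CommRing R] [Fintype R] [DecidableEq R] (m : R) :
    #{σ : Matrix (Fin 2) (Fin 2) R | σ.det = m}
      = ∑ ab : R × R, #{cd | detSecondRowHom ab.1 ab.2 cd = m} := by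
  let e : Matrix (Fin 2) (Fin 2) R ≃ (R × R) × (R × R) :=
    (finTwoArrowEquiv _).trans ((finTwoArrowEquiv R).prodCongr (finTwoArrowEquiv R))
  simp only [card_filter]
  rw [← Fintype.sum_prod_type', ← e.symm.sum_comp]
  refine Fintype.sum_congr _ _ fun x => ?_
  rw [Matrix.det_fin_two]
  rfl

noncomputable def rowContent {p n : ℕ} (a b : ZMod (p ^ n)) : ℕ :=
  min (truncMultiplicity (p : ZMod (p ^ n)) n a) (truncMultiplicity (p : ZMod (p ^ n)) n b)

section rowContent

variable {p n : ℕ}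

theorem rowContent_le (a b : ZMod (p ^ n)) : rowContent a b ≤ n :=
  min_le_of_left_le (truncMultiplicity_le _ n a)

theorem le_rowContent_iff {k : ℕ} (hk : k ≤ n) (a b : ZMod (p ^ n)) :
    k ≤ rowContent a b ↔ (p : ZMod (p ^ n)) ^ k ∣ a ∧ (p : ZMod (p ^ n)) ^ k ∣ b := by
  rw [rowContent, le_min_iff, pow_dvd_iff_le_truncMultiplicity hk,
    pow_dvd_iff_le_truncMultiplicity hk]

section NeZero

variable [NeZero p]

theorem card_le_rowContent {k : ℕ} (hk : k ≤ n) :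
    #{ab : ZMod (p ^ n) × ZMod (p ^ n) | k ≤ rowContent ab.1 ab.2} = (p ^ (n - k)) ^ 2 := by
  simp_rw [le_rowContent_iff hk]
  rw [← univ_product_univ, filter_product, card_product, ZMod.card_pow_dvd hk, sq]

theorem card_rowContent_eq_add_sq {k : ℕ} (hk : k < n) :
    #{ab : ZMod (p ^ n) × ZMod (p ^ n) | rowContent ab.1 ab.2 = k} + (p ^ (n - (k + 1))) ^ 2
      = (p ^ (n - k)) ^ 2 := by
  rw [← card_le_rowContent hk, ← card_le_rowContent hk.le]
  exact card_filter_eq_add_card_filter_lt _ k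

theorem card_rowContent_eq_self :
    #{ab : ZMod (p ^ n) × ZMod (p ^ n) | rowContent ab.1 ab.2 = n} = 1 := by
  have h := card_filter_eq_add_card_filter_lt (fun ab : ZMod (p ^ n) × ZMod (p ^ n) =>
    rowContent ab.1 ab.2) n
  rw [card_le_rowContent le_rfl, Nat.sub_self, pow_zero, one_pow,
    filter_false_of_mem fun ab _ => not_lt.2 (rowContent_le ab.1 ab.2), card_empty,
    add_zero] at h
  exact h

end NeZero

variable [Fact p.Prime]

theorem mem_range_detSecondRowHom_iff (a b y : ZMod (p ^ n)) :
    y ∈ (detSecondRowHom a b).range ↔ (p : ZMod (p ^ n)) ^ rowContent a b ∣ y := by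
  obtain ⟨hda, hdb⟩ := (le_rowContent_iff (rowContent_le a b) a b).1 le_rfl
  constructor
  · rintro ⟨cd, rfl⟩
    exact dvd_sub (hda.mul_right _) (hdb.mul_right _)
  · rintro ⟨z, rfl⟩
    rcases min_choice (truncMultiplicity (p : ZMod (p ^ n)) n a)
      (truncMultiplicity (p : ZMod (p ^ n)) n b) with h | h
    · obtain ⟨u, hu⟩ := (ZMod.associated_pow_truncMultiplicity a).symm
      refine ⟨(0, ↑u * z), ?_⟩
      simp [detSecondRowHom, rowContent, h, ← hu, mul_assoc]
    · obtain ⟨u, hu⟩ := (ZMod.associated_pow_truncMultiplicity b).symm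
      refine ⟨(-(↑u * z), 0), ?_⟩
      simp [detSecondRowHom, rowContent, h, ← hu, mul_assoc]

theorem card_detSecondRowHom_fiber (a b m : ZMod (p ^ n)) :
    #{cd | detSecondRowHom a b cd = m}
      = if (p : ZMod (p ^ n)) ^ rowContent a b ∣ m then p ^ (n + rowContent a b) else 0 := by
  split_ifs with hm
  · have key := (detSecondRowHom a b).card_fiber_mul_card_range
      ((mem_range_detSecondRowHom_iff a b m).2 hm)
    rw [Nat.card_congr (Equiv.subtypeEquivRight (mem_range_detSecondRowHom_iff a b)),
      Nat.card_eq_fintype_card, Fintype.card_subtype, ZMod.card_pow_dvd (rowContent_le a b),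
      Fintype.card_prod, ZMod.card] at key
    refine Nat.eq_of_mul_eq_mul_right (pow_pos (Fact.out : p.Prime).pos (n - rowContent a b)) ?_
    rw [key, ← pow_add, ← pow_add]
    have := rowContent_le a b
    congr 1
    omega
  · refine card_eq_zero.2 (filter_eq_empty_iff.2 fun cd _ hcd => hm ?_)
    exact (mem_range_detSecondRowHom_iff a b m).1 ⟨cd, hcd⟩

theorem card_det_eq_sum_card_rowContent {m : ZMod (p ^ n)} {r : ℕ}
    (hm : ∀ k ≤ n, (p : ZMod (p ^ n)) ^ k ∣ m ↔ k ≤ r) :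
    #{σ : Matrix (Fin 2) (Fin 2) (ZMod (p ^ n)) | σ.det = m}
      = ∑ k ∈ range (r + 1),
          #{ab : ZMod (p ^ n) × ZMod (p ^ n) | rowContent ab.1 ab.2 = k} * p ^ (n + k) := by
  calc _ = ∑ ab : ZMod (p ^ n) × ZMod (p ^ n) with rowContent ab.1 ab.2 ∈ range (r + 1),
        p ^ (n + rowContent ab.1 ab.2) := by
        rw [card_det_eq_sum, sum_filter]
        refine sum_congr rfl fun ab _ => ?_
        refine (card_detSecondRowHom_fiber ab.1 ab.2 m).trans (if_congr ?_ rfl rfl)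
        rw [mem_range, Nat.lt_succ_iff, hm _ (rowContent_le _ _)]
    _ = ∑ k ∈ range (r + 1), ∑ ab : ZMod (p ^ n) × ZMod (p ^ n) with rowContent ab.1 ab.2 = k,
        p ^ (n + k) := (sum_fiberwise_eq_sum_filter' _ _
          (fun ab : ZMod (p ^ n) × ZMod (p ^ n) => rowContent ab.1 ab.2) fun k => p ^ (n + k)).symm
    _ = _ := by simp only [sum_const, smul_eq_mul]

end rowContent

/-- The geometric sum `∑_{k < j} (p^(2(n-k)) - p^(2(n-k-1))) p^(n+k)`, multiplied by `p^(j+2)`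
so that it has a closed form in `ℤ`. -/
theorem pow_mul_sum_eq_of_add_sq {p n : ℕ} {E : ℕ → ℕ}
    (hE : ∀ k < n, E k + (p ^ (n - (k + 1))) ^ 2 = (p ^ (n - k)) ^ 2) {j : ℕ} (hj : j ≤ n) :
    (p : ℤ) ^ (j + 2) * ∑ k ∈ range j, (E k : ℤ) * p ^ (n + k)
      = (p + 1) * p ^ (3 * n + 1) * (p ^ j - 1) := by
  induction j with
  | zero => simp
  | succ j ih =>
    obtain ⟨t, rfl⟩ := Nat.exists_eq_add_of_lt hj
    have h := hE j (by omega)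
    rw [show j + t + 1 - (j + 1) = t by omega, show j + t + 1 - j = t + 1 by omega] at h
    have h' : (E j : ℤ) + ((p : ℤ) ^ t) ^ 2 = ((p : ℤ) ^ (t + 1)) ^ 2 := by exact_mod_cast h
    rw [sum_range_succ]
    linear_combination (p : ℤ) * ih (by omega) + (p : ℤ) ^ (3 * j + t + 4) * h'

theorem det_count (ℓ : ℕ) (hℓ : ℓ.Prime) (M : ℕ) (hM : 1 ≤ M)
    (r s : ℕ) (hr : r = padicValNat ℓ M) :
    ℓ ^ 2 * Nat.card {σ : Matrix (Fin 2) (Fin 2) (ZMod (ℓ ^ (r + s))) //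
        σ.det = (M : ZMod (ℓ ^ (r + s)))} =
      ℓ ^ (2 * r) * (ℓ ^ (3 * s) * (ℓ + 1) * (ℓ ^ (r + 1) - 1) + if s = 0 then 1 else 0) := by
  have : Fact ℓ.Prime := ⟨hℓ⟩
  have hdvd (k : ℕ) (hk : k ≤ r + s) :
      (ℓ : ZMod (ℓ ^ (r + s))) ^ k ∣ (M : ZMod (ℓ ^ (r + s))) ↔ k ≤ r := by
    rw [← Nat.cast_pow, ZMod.natCast_dvd_natCast_iff (pow_dvd_pow ℓ hk), hr,
      padicValNat_dvd_iff_le (by omega)]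
  have hsum {j : ℕ} (hj : j ≤ r + s) :=
    pow_mul_sum_eq_of_add_sq (fun k hk => card_rowContent_eq_add_sq (p := ℓ) hk) hj
  have hℓ0 : (ℓ : ℤ) ≠ 0 := by exact_mod_cast hℓ.ne_zero
  rw [Nat.card_eq_fintype_card, Fintype.card_subtype, card_det_eq_sum_card_rowContent hdvd,
    ← Nat.cast_inj (R := ℤ)]
  rcases s with _ | s
  · simp only [Nat.add_zero] at hsum ⊢
    rw [sum_range_succ, card_rowContent_eq_self]
    refine mul_left_cancel₀ (pow_ne_zero r hℓ0) ?_
    push_cast [Nat.one_le_pow (r + 1) ℓ hℓ.pos]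
    linear_combination hsum le_rfl
  · refine mul_left_cancel₀ (pow_ne_zero (r + 1) hℓ0) ?_
    push_cast [Nat.one_le_pow (r + 1) ℓ hℓ.pos]
    linear_combination hsum (by omega : r + 1 ≤ r + (s + 1))
end
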